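/- arXiv:0903.3936 — 6 statements merged into one kernel-verified Lean document; each statement's English description precedes it below -/
import Mathlib

section
/- Let S be the ideal of ℤ[x₁,…,xₙ] generated by the symmetric polynomials of strictly positive degree. Then the ideal generated by the polynomials h_{n-i+1}(x_{n-i+1},…,xₙ) for i = 1,…,n equals S. -/
/-!
Write `U r` for the variables `x_r, …, x_{n-1}` (0-indexed). Adding one variable gives the
recurrence `h_{m+1}(insert a s) = h_{m+1}(s) + x_a h_m(insert a s)`. Read along
`U r = insert x_r (U (r+1))`, it shows that the diagonal generators `h_k(U (k-1))` produce every
`h_m(U r)` with `r < m`, in particular every `h_m(x_0, …, x_{n-1})`, `m ≥ 1`.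

Conversely, modulo any ideal containing `h_1, h_2, …` of all the variables, the identity
`E_s(-t) · H(t) = H_{sᶜ}(t)` of generating functions gives `h_m(sᶜ) ≡ (-1)^m e_m(s)`. For
`s = univ` this puts every `e_m`, hence (fundamental theorem) every symmetric polynomial without
constant term, in the ideal; for `sᶜ = U (k-1)` it gives `h_k(U (k-1)) ≡ ± e_k(s) = 0`, as `s` has
only `k - 1` elements.
-/

open MvPolynomial

/-- Sum of all monomials of degree `k` in the variables indexed by `s`. -/
noncomputable def hpoly (n k : ℕ) (s : Finset (Fin n)) : MvPolynomial (Fin n) ℤ :=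
  ∑ μ ∈ s.sym k, (μ.1.map MvPolynomial.X).prod

open Finset

theorem Multiset.esymm_zero {R : Type*} [CommSemiring R] (s : Multiset R) : s.esymm 0 = 1 := by
  simp [Multiset.esymm, Multiset.powersetCard_zero_left]

theorem Multiset.esymm_cons_succ {R : Type*} [CommSemiring R] (a : R) (s : Multiset R) (k : ℕ) :
    (a ::ₘ s).esymm (k + 1) = s.esymm (k + 1) + a * s.esymm k := by
  simp only [Multiset.esymm, Multiset.powersetCard_cons, Multiset.map_add, Multiset.sum_add,
    Multiset.map_map, Function.comp_def, Multiset.prod_cons, Multiset.sum_map_mul_left]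

theorem Multiset.esymm_eq_zero_of_card_lt {R : Type*} [CommSemiring R] {s : Multiset R} {k : ℕ}
    (h : card s < k) : s.esymm k = 0 := by
  simp [Multiset.esymm, Multiset.powersetCard_eq_empty k h]

theorem Finset.sym_succ_insert {α : Type*} [DecidableEq α] (a : α) (s : Finset α) (k : ℕ) :
    (insert a s).sym (k + 1) = s.sym (k + 1) ∪ ((insert a s).sym k).image (Sym.cons a) := by
  ext μ
  simp only [mem_union, mem_image, mem_sym_iff, mem_insert]
  constructor
  · intro hμ
    by_cases ha : a ∈ μ
    · obtain ⟨ν, rfl⟩ := Sym.exists_cons_of_mem ha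
      exact Or.inr ⟨ν, fun b hb => hμ b (Sym.mem_cons_of_mem hb), rfl⟩
    · exact Or.inl fun b hb => (hμ b hb).resolve_left (by rintro rfl; exact ha hb)
  · rintro (hμ | ⟨ν, hν, rfl⟩) b hb
    · exact Or.inr (hμ b hb)
    · exact (Sym.mem_cons.1 hb).elim Or.inl (hν b)

theorem Finset.disjoint_sym_image_cons {α : Type*} [DecidableEq α] {a : α} {s : Finset α}
    (h : a ∉ s) (k : ℕ) (t : Finset (Sym α k)) :
    Disjoint (s.sym (k + 1)) (t.image (Sym.cons a)) := by
  refine disjoint_right.2 ?_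
  rintro _ hμ hμs
  obtain ⟨ν, -, rfl⟩ := mem_image.1 hμ
  exact h (mem_sym_iff.1 hμs a (Sym.mem_cons_self a ν))

namespace MvPolynomial

theorem aeval_sub_C_constantCoeff_mem {σ τ R : Type*} [CommRing R]
    {f : σ → MvPolynomial τ R} {J : Ideal (MvPolynomial τ R)} (hf : ∀ i, f i ∈ J)
    (q : MvPolynomial σ R) : aeval f q - C (constantCoeff q) ∈ J := by
  rw [← Ideal.Quotient.eq, ← Ideal.Quotient.mkₐ_eq_mk R, comp_aeval_apply]
  simp [Ideal.Quotient.eq_zero_iff_mem.2 (hf _)]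

theorem constantCoeff_esymm_succ (σ R : Type*) [Fintype σ] [CommRing R] (m : ℕ) :
    constantCoeff (esymm σ R (m + 1)) = 0 := by
  refine (map_sum _ _ _).trans (sum_eq_zero fun t ht => ?_)
  obtain ⟨i, hi⟩ := card_pos.1 (by rw [(mem_powersetCard.1 ht).2]; exact m.succ_pos)
  rw [map_prod]
  exact prod_eq_zero hi (by simp)

theorem IsSymmetric.sub_C_constantCoeff_mem {σ R : Type*} [Fintype σ] [CommRing R]
    {p : MvPolynomial σ R} (hp : p.IsSymmetric) {J : Ideal (MvPolynomial σ R)}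
    (hJ : ∀ m, esymm σ R (m + 1) ∈ J) : p - MvPolynomial.C (constantCoeff p) ∈ J := by
  obtain ⟨q, hq⟩ := esymmAlgHom_surjective R le_rfl ⟨p, hp⟩
  replace hq : aeval (fun i : Fin (Fintype.card σ) => esymm σ R (i + 1)) q = p :=
    (esymmAlgHom_apply q).symm.trans (congrArg Subtype.val hq)
  have hconst : constantCoeff p = constantCoeff q := by
    have h := aeval_sub_C_constantCoeff_mem (J := RingHom.ker constantCoeff)
      (fun i : Fin _ => constantCoeff_esymm_succ σ R i) q
    rwa [hq, RingHom.mem_ker, map_sub, constantCoeff_C, sub_eq_zero] at h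
  rw [hconst, ← hq]
  exact aeval_sub_C_constantCoeff_mem (fun i : Fin _ => hJ i) q

end MvPolynomial

section hpoly

variable {n : ℕ}

lemma hpoly_zero (s : Finset (Fin n)) : hpoly n 0 s = 1 := by
  rw [hpoly, sym_zero, sum_singleton]
  rfl

lemma hpoly_empty (k : ℕ) : hpoly n (k + 1) ∅ = 0 := by
  simp [hpoly]

lemma hpoly_univ (k : ℕ) : hpoly n k univ = hsymm (Fin n) ℤ k := by
  simp [hpoly, hsymm, sym_univ]

lemma constantCoeff_hpoly {k : ℕ} (hk : k ≠ 0) (s : Finset (Fin n)) :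
    constantCoeff (hpoly n k s) = 0 := by
  refine (map_sum _ _ _).trans (sum_eq_zero fun μ _ => ?_)
  simp [map_multiset_prod, Multiset.map_const', hk]

lemma hpoly_insert {a : Fin n} {s : Finset (Fin n)} (h : a ∉ s) (k : ℕ) :
    hpoly n (k + 1) (insert a s) = hpoly n (k + 1) s + X a * hpoly n k (insert a s) := by
  rw [hpoly, sym_succ_insert, sum_union (disjoint_sym_image_cons h k _),
    sum_image fun ν _ ν' _ => (Sym.cons_inj_right a ν ν').1, hpoly, hpoly, mul_sum]
  simp [Sym.cons]

variable (J : Ideal (MvPolynomial (Fin n) ℤ))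

lemma esymm_sub_hpoly_compl_mem (hJ : ∀ m, hpoly n (m + 1) univ ∈ J) (s : Finset (Fin n))
    (m : ℕ) : (s.val.map X).esymm m - (-1) ^ m * hpoly n m sᶜ ∈ J := by
  induction s using Finset.induction_on generalizing m with
  | empty =>
    cases m with
    | zero => simp [Multiset.esymm_zero, hpoly_zero]
    | succ m =>
      rw [Multiset.esymm_eq_zero_of_card_lt (by simp), compl_empty, zero_sub]
      exact J.neg_mem (J.mul_mem_left _ (hJ m))
  | insert a s ha ih =>
    cases m with
    | zero => simp [Multiset.esymm_zero, hpoly_zero]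
    | succ m =>
      have hcompl : sᶜ = insert a (insert a s)ᶜ := by
        ext b
        by_cases hb : b = a <;> simp [hb, ha]
      have hsplit : ((insert a s).val.map X).esymm (m + 1) -
            (-1) ^ (m + 1) * hpoly n (m + 1) (insert a s)ᶜ =
          ((s.val.map X).esymm (m + 1) - (-1) ^ (m + 1) * hpoly n (m + 1) sᶜ) +
            X a * ((s.val.map X).esymm m - (-1) ^ m * hpoly n m sᶜ) := by
        rw [insert_val_of_notMem ha, Multiset.map_cons, Multiset.esymm_cons_succ, hcompl,
          hpoly_insert (notMem_compl.2 (mem_insert_self a s)), ← hcompl]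
        ring
      rw [hsplit]
      exact J.add_mem (ih _) (J.mul_mem_left _ (ih m))

lemma hpoly_mem_of_card_compl_lt (hJ : ∀ m, hpoly n (m + 1) univ ∈ J) {s : Finset (Fin n)}
    {m : ℕ} (hs : #sᶜ < m) : hpoly n m s ∈ J := by
  have h := esymm_sub_hpoly_compl_mem J hJ sᶜ m
  rw [compl_compl, Multiset.esymm_eq_zero_of_card_lt (by simpa using hs), zero_sub] at h
  simpa [← mul_assoc, ← mul_pow] using J.mul_mem_left ((-1) ^ m) (J.neg_mem h)

lemma esymm_succ_mem (hJ : ∀ m, hpoly n (m + 1) univ ∈ J) (m : ℕ) :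
    esymm (Fin n) ℤ (m + 1) ∈ J := by
  simpa [esymm_eq_multiset_esymm, hpoly_empty] using
    esymm_sub_hpoly_compl_mem J hJ univ (m + 1)

def varsFrom (n r : ℕ) : Finset (Fin n) := univ.filter fun t : Fin n => r ≤ (t : ℕ)

lemma varsFrom_eq_insert {r : ℕ} (hr : r < n) :
    varsFrom n r = insert ⟨r, hr⟩ (varsFrom n (r + 1)) := by
  ext t
  simp only [varsFrom, mem_filter, mem_univ, true_and, mem_insert, Fin.ext_iff]
  omega

lemma notMem_varsFrom_succ {r : ℕ} (hr : r < n) : (⟨r, hr⟩ : Fin n) ∉ varsFrom n (r + 1) := by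
  simp [varsFrom]

lemma card_compl_varsFrom (r : ℕ) : #(varsFrom n r)ᶜ = min n r := by
  simp [varsFrom, Fin.card_filter_val_lt]

lemma hpoly_varsFrom_of_le {r : ℕ} (hr : n ≤ r) (k : ℕ) :
    hpoly n (k + 1) (varsFrom n r) = 0 := by
  convert hpoly_empty k
  ext t
  simp only [varsFrom, mem_filter, mem_univ, true_and, notMem_empty, iff_false, not_le]
  omega

lemma hpoly_varsFrom_mem (hJ : ∀ k, 1 ≤ k → k ≤ n → hpoly n k (varsFrom n (k - 1)) ∈ J)
    (d r : ℕ) : hpoly n (r + d + 1) (varsFrom n r) ∈ J := by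
  rcases le_or_gt n r with hr | hr
  · rw [hpoly_varsFrom_of_le hr]
    exact J.zero_mem
  induction d generalizing r with
  | zero => simpa using hJ (r + 1) (by omega) hr
  | succ d ih =>
    rw [varsFrom_eq_insert hr, ← add_assoc, hpoly_insert (notMem_varsFrom_succ hr),
      ← varsFrom_eq_insert hr]
    refine J.add_mem ?_ (J.mul_mem_left _ (ih r hr))
    rcases le_or_gt n (r + 1) with hr' | hr'
    · rw [hpoly_varsFrom_of_le hr']
      exact J.zero_mem
    · simpa only [add_right_comm r 1 d] using ih (r + 1) hr'

end hpoly

/-- The ideal generated by the polynomials h_{n-i+1}(x_{n-i+1},…,xₙ), i = 1,…,n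
(equivalently h_k(x_k,…,xₙ) for k = 1,…,n) equals the ideal S generated by all
symmetric polynomials with zero constant term. -/
theorem span_hpoly_eq_symmetric_ideal (n : ℕ) :
    Ideal.span {q : MvPolynomial (Fin n) ℤ | ∃ k : ℕ, 1 ≤ k ∧ k ≤ n ∧
        q = hpoly n k (Finset.univ.filter fun t : Fin n => k - 1 ≤ (t : ℕ))} =
    Ideal.span {p : MvPolynomial (Fin n) ℤ | p.IsSymmetric ∧ constantCoeff p = 0} := by
  set T := Ideal.span {q : MvPolynomial (Fin n) ℤ | ∃ k : ℕ, 1 ≤ k ∧ k ≤ n ∧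
    q = hpoly n k (Finset.univ.filter fun t : Fin n => k - 1 ≤ (t : ℕ))}
  set S := Ideal.span {p : MvPolynomial (Fin n) ℤ | p.IsSymmetric ∧ constantCoeff p = 0}
  have hS : ∀ m, hpoly n (m + 1) univ ∈ S := fun m => Ideal.subset_span
    ⟨hpoly_univ (m + 1) ▸ hsymm_isSymmetric _ _ _, constantCoeff_hpoly m.succ_ne_zero _⟩
  have hT : ∀ m, hpoly n (m + 1) univ ∈ T := fun m => by
    simpa [varsFrom] using
      hpoly_varsFrom_mem T (fun k hk hkn => Ideal.subset_span ⟨k, hk, hkn, rfl⟩) m 0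
  refine le_antisymm (Ideal.span_le.2 ?_) (Ideal.span_le.2 ?_)
  · rintro _ ⟨k, hk, hkn, rfl⟩
    exact hpoly_mem_of_card_compl_lt S hS (s := varsFrom n (k - 1))
      (by rw [card_compl_varsFrom]; omega)
  · rintro p ⟨hp, hp0⟩
    simpa [hp0] using hp.sub_C_constantCoeff_mem (esymm_succ_mem T hT)
end

section
/- Let S be the ideal of ℚ[x₁,…,xₙ] generated by symmetric polynomials of strictly positive degree. Then the monomial xₙ^{n-1} x_{n-1}^{n-2} ⋯ x₂ is congruent modulo S to (1/n!) ∏_{i>j} (x_i − x_j). -/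
open MvPolynomial Finset

noncomputable section PointClassAux

/-- The ideal generated by symmetric polynomials with zero constant term. -/
def SIdeal (n : ℕ) : Ideal (MvPolynomial (Fin n) ℚ) :=
  Ideal.span {p | p.IsSymmetric ∧ constantCoeff p = 0}

lemma constantCoeff_esymm_zero (n k : ℕ) (hk : k ≠ 0) :
    constantCoeff (esymm (Fin n) ℚ k) = 0 := by
  rw [esymm, map_sum]
  refine Finset.sum_eq_zero fun t ht => ?_
  rw [Finset.mem_powersetCard] at ht
  obtain ⟨i, hi⟩ := Finset.card_pos.mp (ht.2 ▸ Nat.pos_of_ne_zero hk)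
  rw [map_prod]
  exact Finset.prod_eq_zero hi (constantCoeff_X (R := ℚ) i)

lemma esymm_mem (n k : ℕ) (hk : k ≠ 0) : esymm (Fin n) ℚ k ∈ SIdeal n :=
  Ideal.subset_span ⟨esymm_isSymmetric _ _ _, constantCoeff_esymm_zero n k hk⟩

lemma mul_mem_of_span {A : Type*} [CommRing A] {T : Set A} {I : Ideal A} {g : A}
    (h : ∀ t ∈ T, t * g ∈ I) {x : A} (hx : x ∈ Ideal.span T) : x * g ∈ I :=
  Ideal.mem_colon_span_singleton.mp
    (Ideal.span_le.mpr (fun t ht => Ideal.mem_colon_span_singleton.mpr (h t ht)) hx)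

lemma constantCoeff_eq_zero_of_mem {n : ℕ} {T : Set (MvPolynomial (Fin n) ℚ)}
    (hT : ∀ t ∈ T, constantCoeff t = 0) {x} (hx : x ∈ Ideal.span T) :
    constantCoeff x = 0 := by
  have hle : Ideal.span T ≤ RingHom.ker (constantCoeff : MvPolynomial (Fin n) ℚ →+* ℚ) :=
    Ideal.span_le.mpr (fun t ht => RingHom.mem_ker.mpr (hT t ht))
  exact hle hx

lemma aeval_sub_C_mem {σ : Type*} {A : Type*} [CommRing A] [Algebra ℚ A]
    (e : σ → A) (q : MvPolynomial σ ℚ) :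
    aeval e q - algebraMap ℚ A (constantCoeff q) ∈ Ideal.span (Set.range e) := by
  induction q using MvPolynomial.induction_on with
  | C a => simp
  | add p q hp hq =>
    rw [map_add, map_add, map_add]
    convert Ideal.add_mem _ hp hq using 1
    ring
  | mul_X p i hp =>
    rw [map_mul, aeval_X, map_mul, constantCoeff_X, mul_zero, map_zero, sub_zero]
    exact Ideal.mul_mem_left _ _ (Ideal.subset_span ⟨i, rfl⟩)

/-- Ideal-theoretic fundamental theorem: a symmetric polynomial with zero constant
term lies in the ideal generated by the positive-degree elementary symmetric polynomials. -/
lemma mem_span_esymm {n : ℕ} {f : MvPolynomial (Fin n) ℚ} (hf : f.IsSymmetric)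
    (h0 : constantCoeff f = 0) :
    f ∈ Ideal.span (Set.range fun i : Fin n => esymm (Fin n) ℚ ((i : ℕ) + 1)) := by
  obtain ⟨q, hq⟩ := esymmAlgHom_fin_surjective ℚ (le_refl n) ⟨f, hf⟩
  set e := fun i : Fin n => esymm (Fin n) ℚ ((i : ℕ) + 1) with he
  have hfe : f = aeval e q := by
    have := congrArg Subtype.val hq
    rw [esymmAlgHom_apply] at this
    exact this.symm
  have h1 := aeval_sub_C_mem e q
  have hc0 : ∀ t ∈ Set.range e, constantCoeff t = 0 := by
    rintro t ⟨i, rfl⟩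
    exact constantCoeff_esymm_zero n _ (Nat.succ_ne_zero _)
  have hc : constantCoeff (aeval e q - algebraMap ℚ _ (constantCoeff q)) = 0 :=
    constantCoeff_eq_zero_of_mem hc0 h1
  rw [map_sub, ← hfe, h0] at hc
  have hq0 : constantCoeff q = 0 := by simpa using hc.symm
  rw [hfe]
  simpa [hq0] using h1

lemma esymm_cons' {A : Type*} [CommSemiring A] (a : A) (s : Multiset A) (k : ℕ) :
    (a ::ₘ s).esymm (k + 1) = s.esymm (k + 1) + a * s.esymm k := by
  rw [Multiset.esymm, Multiset.powersetCard_cons, Multiset.map_add, Multiset.sum_add,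
    Multiset.map_map, Multiset.esymm, Multiset.esymm, ← Multiset.sum_map_mul_left]
  congr 1
  exact congrArg _ (Multiset.map_congr rfl fun t _ => by
    rw [Function.comp_apply, Multiset.prod_cons])

lemma map_multiset_esymm {A B F : Type*} [CommSemiring A] [CommSemiring B]
    [FunLike F A B] [RingHomClass F A B] (f : F)
    (s : Multiset A) (k : ℕ) : f (s.esymm k) = (s.map f).esymm k := by
  rw [Multiset.esymm, Multiset.esymm, map_multiset_sum, Multiset.map_map,
    Multiset.powersetCard_map, Multiset.map_map]
  exact congrArg _ (Multiset.map_congr rfl fun t _ => by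
    rw [Function.comp_apply, Function.comp_apply, map_multiset_prod])

lemma univ_val_map_X (n : ℕ) :
    ((univ : Finset (Fin (n+1))).val.map (X (R := ℚ)))
      = X (Fin.last n) ::ₘ ((univ : Finset (Fin n)).val.map fun i => X (Fin.castSucc i)) := by
  rw [Fin.univ_castSuccEmb, Finset.cons_val, Multiset.map_cons, Finset.map_val,
    Multiset.map_map]
  rfl

lemma rename_esymm_eq (n k : ℕ) :
    rename (R := ℚ) Fin.castSucc (esymm (Fin n) ℚ k)
      = (((univ : Finset (Fin n)).val.map
          fun i => (X (Fin.castSucc i) : MvPolynomial (Fin (n+1)) ℚ))).esymm k := by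
  rw [esymm_eq_multiset_esymm, map_multiset_esymm (rename (R := ℚ) Fin.castSucc),
    Multiset.map_map]
  congr 1
  exact Multiset.map_congr rfl fun i _ => by simp

lemma esymm_succ_eq (n k : ℕ) :
    esymm (Fin (n+1)) ℚ (k+1) =
      rename Fin.castSucc (esymm (Fin n) ℚ (k+1))
        + X (Fin.last n) * rename Fin.castSucc (esymm (Fin n) ℚ k) := by
  rw [esymm_eq_multiset_esymm, univ_val_map_X, esymm_cons', rename_esymm_eq, rename_esymm_eq]

lemma derivative_finset_prod {R ι : Type*} [CommSemiring R] [DecidableEq ι] (s : Finset ι)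
    (f : ι → Polynomial R) :
    Polynomial.derivative (∏ i ∈ s, f i)
      = ∑ i ∈ s, (∏ j ∈ s.erase i, f j) * Polynomial.derivative (f i) := by
  rw [Finset.prod_eq_multiset_prod, Polynomial.derivative_prod, Finset.sum_eq_multiset_sum]
  exact congrArg _ (Multiset.map_congr rfl fun i hi => by
    rw [Finset.prod_eq_multiset_prod, ← Finset.erase_val])

/-- The polynomial `∏ (t + xᵢ)` whose coefficients are elementary symmetric polynomials. -/
def Pn (n : ℕ) : Polynomial (MvPolynomial (Fin (n+1)) ℚ) :=
  ∏ i : Fin (n+1), (Polynomial.X + Polynomial.C (X i))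

lemma Pn_eval_zero (n : ℕ) : Polynomial.eval (-(X (Fin.last n))) (Pn n) = 0 := by
  rw [Pn, Polynomial.eval_prod]
  refine Finset.prod_eq_zero (Finset.mem_univ (Fin.last n)) ?_
  simp

lemma Pn_eq (n : ℕ) : Pn n = ∑ j ∈ Finset.range (n+2),
    Polynomial.C (esymm (Fin (n+1)) ℚ j) * Polynomial.X ^ (n+1-j) := by
  rw [Pn, MvPolynomial.prod_C_add_X_eq_sum_esymm]
  simp [Fintype.card_fin]

lemma last_pow_mem (n : ℕ) :
    (X (Fin.last n) : MvPolynomial (Fin (n+1)) ℚ) ^ (n+1) ∈ SIdeal (n+1) := by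
  set y : MvPolynomial (Fin (n+1)) ℚ := X (Fin.last n) with hy
  have h := Pn_eval_zero n
  rw [Pn_eq, Polynomial.eval_finset_sum] at h
  simp only [Polynomial.eval_mul, Polynomial.eval_C, Polynomial.eval_pow, Polynomial.eval_X] at h
  rw [Finset.sum_range_succ'] at h
  simp only [esymm_zero, one_mul, Nat.sub_zero, Nat.succ_sub_succ, ← hy] at h
  have h0 := eq_neg_of_add_eq_zero_right h
  have hmem : ((-y)^(n+1) : MvPolynomial (Fin (n+1)) ℚ) ∈ SIdeal (n+1) := by
    rw [h0]
    exact neg_mem (Ideal.sum_mem _ fun j hj =>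
      Ideal.mul_mem_right _ _ (esymm_mem _ _ (Nat.succ_ne_zero j)))
  have hne : y ^ (n+1) = (-1)^(n+1) * (-y)^(n+1) := by
    rw [← mul_pow, neg_one_mul, neg_neg]
  rw [hne]
  exact Ideal.mul_mem_left _ _ hmem

lemma prod_neg' {ι A : Type*} [CommRing A] (s : Finset ι) (f : ι → A) :
    ∏ i ∈ s, -f i = (-1) ^ s.card * ∏ i ∈ s, f i := by
  rw [← Finset.prod_const, ← Finset.prod_mul_distrib]
  exact Finset.prod_congr rfl fun i _ => (neg_one_mul _).symm

lemma eval_deriv_way1 (n : ℕ) :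
    Polynomial.eval (-(X (Fin.last n))) (Polynomial.derivative (Pn n))
      = ∏ i ∈ (univ : Finset (Fin (n+1))).erase (Fin.last n), (X i - X (Fin.last n)) := by
  rw [Pn, derivative_finset_prod, Polynomial.eval_finset_sum,
    Finset.sum_eq_single (Fin.last n)]
  · simp only [Polynomial.eval_mul, Polynomial.derivative_X_add_C, Polynomial.eval_one, mul_one,
      Polynomial.eval_prod, Polynomial.eval_add, Polynomial.eval_X, Polynomial.eval_C]
    exact Finset.prod_congr rfl fun i _ => by ring
  · intro i _ hne
    have hlast : Fin.last n ∈ (univ : Finset (Fin (n+1))).erase i :=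
      Finset.mem_erase.mpr ⟨Ne.symm hne, Finset.mem_univ _⟩
    rw [Polynomial.eval_mul, Polynomial.eval_prod]
    apply mul_eq_zero_of_left
    refine Finset.prod_eq_zero hlast ?_
    simp
  · simp

lemma eval_deriv_way2 (n : ℕ) :
    Polynomial.eval (-(X (Fin.last n))) (Polynomial.derivative (Pn n))
      = ∑ j ∈ Finset.range (n+2), esymm (Fin (n+1)) ℚ j
          * ((n+1-j : ℕ) : MvPolynomial (Fin (n+1)) ℚ) * (-(X (Fin.last n))) ^ (n-j) := by
  rw [Pn_eq, map_sum, Polynomial.eval_finset_sum]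
  refine Finset.sum_congr rfl fun j hj => ?_
  rw [Polynomial.derivative_C_mul_X_pow, Polynomial.eval_mul, Polynomial.eval_C,
    Polynomial.eval_pow, Polynomial.eval_X]
  have h1 : n + 1 - j - 1 = n - j := by omega
  rw [h1]

lemma prod_erase_sub (n : ℕ) :
    (∏ i ∈ (univ : Finset (Fin (n+1))).erase (Fin.last n), (X (Fin.last n) - X i))
      - ((n+1 : ℕ) : MvPolynomial (Fin (n+1)) ℚ) * X (Fin.last n) ^ n ∈ SIdeal (n+1) := by
  set y : MvPolynomial (Fin (n+1)) ℚ := X (Fin.last n) with hy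
  have h := (eval_deriv_way1 n).symm.trans (eval_deriv_way2 n)
  rw [Finset.sum_range_succ'] at h
  simp only [esymm_zero, one_mul, Nat.sub_zero, Nat.succ_sub_succ, ← hy] at h
  have hA : (∏ i ∈ (univ : Finset (Fin (n+1))).erase (Fin.last n), (X i - y))
      - ((n+1 : ℕ) : MvPolynomial (Fin (n+1)) ℚ) * (-y) ^ n ∈ SIdeal (n+1) := by
    rw [h, add_sub_assoc]
    refine Ideal.add_mem _ ?_ ?_
    · exact Ideal.sum_mem _ fun j hj => Ideal.mul_mem_right _ _
        (Ideal.mul_mem_right _ _ (esymm_mem _ _ (Nat.succ_ne_zero j)))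
    · simp
  have hcard : ((univ : Finset (Fin (n+1))).erase (Fin.last n)).card = n := by
    rw [Finset.card_erase_of_mem (Finset.mem_univ _)]
    simp
  have hEq : (∏ i ∈ (univ : Finset (Fin (n+1))).erase (Fin.last n), (y - X i))
      - ((n+1 : ℕ) : MvPolynomial (Fin (n+1)) ℚ) * y ^ n
      = (-1 : MvPolynomial (Fin (n+1)) ℚ) ^ n *
        ((∏ i ∈ (univ : Finset (Fin (n+1))).erase (Fin.last n), (X i - y))
          - ((n+1 : ℕ) : MvPolynomial (Fin (n+1)) ℚ) * (-y) ^ n) := by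
    rw [mul_sub]
    congr 1
    · rw [show (∏ i ∈ (univ : Finset (Fin (n+1))).erase (Fin.last n), (y - X i))
            = ∏ i ∈ (univ : Finset (Fin (n+1))).erase (Fin.last n), -(X i - y) from
          Finset.prod_congr rfl fun i _ => (neg_sub _ _).symm, prod_neg', hcard]
    · rw [neg_pow y n, ← mul_assoc,
        mul_comm ((-1 : MvPolynomial (Fin (n+1)) ℚ)^n) (((n+1:ℕ)) : MvPolynomial (Fin (n+1)) ℚ),
        mul_assoc, ← mul_assoc ((-1 : MvPolynomial (Fin (n+1)) ℚ)^n), ← mul_pow]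
      norm_num
  rw [hEq]
  exact Ideal.mul_mem_left _ _ hA

lemma E_congr (n k : ℕ) :
    rename Fin.castSucc (esymm (Fin n) ℚ k) - (-(X (Fin.last n)))^k ∈ SIdeal (n+1) := by
  induction k with
  | zero => simp
  | succ k ih =>
    have hm : esymm (Fin (n+1)) ℚ (k+1) ∈ SIdeal (n+1) := esymm_mem _ _ (Nat.succ_ne_zero k)
    have key : rename Fin.castSucc (esymm (Fin n) ℚ (k+1)) - (-(X (Fin.last n)))^(k+1)
        = esymm (Fin (n+1)) ℚ (k+1)
          - X (Fin.last n) * (rename Fin.castSucc (esymm (Fin n) ℚ k)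
              - (-(X (Fin.last n)))^k) := by
      rw [esymm_succ_eq]
      ring
    rw [key]
    exact Ideal.sub_mem _ hm (Ideal.mul_mem_left _ _ ih)

lemma E_mul_mem (n k : ℕ) :
    rename Fin.castSucc (esymm (Fin n) ℚ (k+1)) * X (Fin.last n) ^ n ∈ SIdeal (n+1) := by
  have h1 := E_congr n (k+1)
  have h2 := last_pow_mem n
  have key : rename Fin.castSucc (esymm (Fin n) ℚ (k+1)) * X (Fin.last n) ^ n
      = (rename Fin.castSucc (esymm (Fin n) ℚ (k+1)) - (-(X (Fin.last n)))^(k+1))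
          * X (Fin.last n) ^ n
        + ((-1 : MvPolynomial (Fin (n+1)) ℚ)^(k+1) * X (Fin.last n) ^ k)
          * X (Fin.last n) ^ (n+1) := by
    ring
  rw [key]
  exact add_mem (Ideal.mul_mem_right _ _ h1) (Ideal.mul_mem_left _ _ h2)

lemma mul_last_pow_mem (n : ℕ) {p : MvPolynomial (Fin n) ℚ} (hp : p ∈ SIdeal n) :
    rename Fin.castSucc p * X (Fin.last n) ^ n ∈ SIdeal (n+1) := by
  have h1 : rename (R := ℚ) Fin.castSucc p ∈
      Ideal.span ((rename (R := ℚ) Fin.castSucc) ''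
        {q : MvPolynomial (Fin n) ℚ | q.IsSymmetric ∧ constantCoeff q = 0}) := by
    rw [← Ideal.map_span]
    exact Ideal.mem_map_of_mem _ hp
  refine mul_mem_of_span ?_ h1
  rintro t ⟨f, ⟨hfs, hf0⟩, rfl⟩
  have h2 := mem_span_esymm hfs hf0
  have h3 : rename (R := ℚ) Fin.castSucc f ∈
      Ideal.span (Set.range fun i : Fin n =>
        rename (R := ℚ) Fin.castSucc (esymm (Fin n) ℚ ((i : ℕ) + 1))) := by
    rw [show (Set.range fun i : Fin n =>
          rename (R := ℚ) Fin.castSucc (esymm (Fin n) ℚ ((i : ℕ) + 1)))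
        = (rename (R := ℚ) Fin.castSucc) ''
            (Set.range fun i : Fin n => esymm (Fin n) ℚ ((i : ℕ) + 1)) from
      Set.range_comp _ _, ← Ideal.map_span]
    exact Ideal.mem_map_of_mem _ h2
  refine mul_mem_of_span ?_ h3
  rintro t ⟨i, rfl⟩
  exact E_mul_mem n i

lemma stair_split (n : ℕ) :
    (∏ i : Fin (n+1), (X i : MvPolynomial (Fin (n+1)) ℚ) ^ (i : ℕ)) =
      rename Fin.castSucc (∏ i : Fin n, X i ^ (i : ℕ)) * X (Fin.last n) ^ n := by
  rw [Fin.prod_univ_castSucc, map_prod]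
  simp

lemma vand_split (n : ℕ) :
    (∏ p ∈ Finset.univ.filter (fun p : Fin (n+1) × Fin (n+1) => p.2 < p.1), (X p.1 - X p.2)) =
      (∏ i ∈ (univ : Finset (Fin (n+1))).erase (Fin.last n), (X (Fin.last n) - X i)) *
      rename Fin.castSucc
        (∏ p ∈ Finset.univ.filter (fun p : Fin n × Fin n => p.2 < p.1),
          (X p.1 - X p.2) : MvPolynomial (Fin n) ℚ) := by
  conv_rhs => rw [Finset.prod_filter, Fintype.prod_prod_type]
  rw [Finset.prod_filter, Fintype.prod_prod_type, Fin.prod_univ_castSucc, mul_comm]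
  congr 1
  · rw [← Finset.prod_filter]
    congr 1
    ext j
    simp [Fin.lt_last_iff_ne_last]
  · rw [map_prod]
    refine Finset.prod_congr rfl fun i _ => ?_
    rw [map_prod, Fin.prod_univ_castSucc,
      if_neg (not_lt.mpr (Fin.castSucc_lt_last i).le), mul_one]
    refine Finset.prod_congr rfl fun j _ => ?_
    rw [apply_ite (rename Fin.castSucc), map_sub, rename_X, rename_X, map_one]
    simp only [Fin.castSucc_lt_castSucc_iff]

end PointClassAux

/-- Modulo the ideal S generated by symmetric polynomials with zero constant term,
xₙ^{n-1} x_{n-1}^{n-2} ⋯ x₂ ≡ (1/n!) ∏_{i>j} (x_i − x_j).  Here x_{i+1} is `X i`. -/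
theorem point_class_eq_vandermonde (n : ℕ) :
    (∏ i : Fin n, X i ^ (i : ℕ)) -
      C ((n.factorial : ℚ)⁻¹) *
        ∏ p ∈ Finset.univ.filter (fun p : Fin n × Fin n => p.2 < p.1), (X p.1 - X p.2) ∈
    Ideal.span {p : MvPolynomial (Fin n) ℚ | p.IsSymmetric ∧ constantCoeff p = 0} := by
  show _ ∈ SIdeal n
  induction n with
  | zero =>
    have h1 : (Finset.univ.filter (fun p : Fin 0 × Fin 0 => p.2 < p.1)) = ∅ := by
      simp [Finset.filter_eq_empty_iff]
    rw [h1]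
    simp only [Finset.univ_eq_empty, Finset.prod_empty, Nat.factorial_zero, Nat.cast_one,
      inv_one, map_one, mul_one, sub_self]
    exact zero_mem _
  | succ n ih =>
    have h1 := mul_last_pow_mem n ih
    have h2 := prod_erase_sub n
    rw [map_sub, map_mul, rename_C] at h1
    rw [stair_split n, vand_split n]
    have hCa : (C (((n+1).factorial : ℚ)⁻¹) : MvPolynomial (Fin (n+1)) ℚ)
        * ((n+1 : ℕ) : MvPolynomial (Fin (n+1)) ℚ) = C ((n.factorial : ℚ)⁻¹) := by
      rw [show ((n+1 : ℕ) : MvPolynomial (Fin (n+1)) ℚ) = C ((n+1 : ℕ) : ℚ) from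
        (C_eq_coe_nat _).symm, ← C_mul]
      congr 1
      rw [Nat.factorial_succ]
      have hne : ((n.factorial : ℚ)) ≠ 0 := Nat.cast_ne_zero.mpr n.factorial_ne_zero
      push_cast
      field_simp
    have key : rename Fin.castSucc (∏ i : Fin n, (X i : MvPolynomial (Fin n) ℚ) ^ (i : ℕ))
          * X (Fin.last n) ^ n
        - C (((n+1).factorial : ℚ)⁻¹) *
          ((∏ i ∈ (univ : Finset (Fin (n+1))).erase (Fin.last n), (X (Fin.last n) - X i)) *
            rename Fin.castSucc
              (∏ p ∈ Finset.univ.filter (fun p : Fin n × Fin n => p.2 < p.1),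
                (X p.1 - X p.2) : MvPolynomial (Fin n) ℚ))
        = (rename Fin.castSucc (∏ i : Fin n, (X i : MvPolynomial (Fin n) ℚ) ^ (i : ℕ))
            - C ((n.factorial : ℚ)⁻¹) *
              rename Fin.castSucc
                (∏ p ∈ Finset.univ.filter (fun p : Fin n × Fin n => p.2 < p.1),
                  (X p.1 - X p.2) : MvPolynomial (Fin n) ℚ)) * X (Fin.last n) ^ n
          + (C (((n+1).factorial : ℚ)⁻¹) *
              rename Fin.castSucc
                (∏ p ∈ Finset.univ.filter (fun p : Fin n × Fin n => p.2 < p.1),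
                  (X p.1 - X p.2) : MvPolynomial (Fin n) ℚ)) *
            -((∏ i ∈ (univ : Finset (Fin (n+1))).erase (Fin.last n), (X (Fin.last n) - X i))
              - ((n+1 : ℕ) : MvPolynomial (Fin (n+1)) ℚ) * X (Fin.last n) ^ n) := by
      linear_combination -(rename Fin.castSucc
        (∏ p ∈ Finset.univ.filter (fun p : Fin n × Fin n => p.2 < p.1),
          (X p.1 - X p.2) : MvPolynomial (Fin n) ℚ) * X (Fin.last n) ^ n) * hCa
    rw [key]
    exact add_mem h1 (Ideal.mul_mem_left _ _ (neg_mem h2))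
end

section
/- In ℚ[x₁,…,xₙ] modulo the ideal S generated by symmetric polynomials of strictly positive degree, one has (xₙ − x_{n-1})(xₙ − x_{n-2})⋯(xₙ − x₁) ≡ n · xₙ^{n-1} (mod S). -/
set_option maxHeartbeats 1000000
set_option synthInstance.maxHeartbeats 200000
open MvPolynomial

/-- In ℚ[x₁,…,x_{n+1}] modulo the ideal S generated by symmetric polynomials with zero
constant term, (x_{n+1} − x_n)⋯(x_{n+1} − x₁) ≡ (n+1)·x_{n+1}ⁿ (there are n+1 variables). -/
theorem prod_last_sub_eq (n : ℕ) :
    (∏ j ∈ Finset.univ.filter (fun j : Fin (n + 1) => j < Fin.last n),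
        (X (Fin.last n) - X j)) - C ((n : ℚ) + 1) * X (Fin.last n) ^ n ∈
    Ideal.span {p : MvPolynomial (Fin (n + 1)) ℚ | p.IsSymmetric ∧ constantCoeff p = 0} := by
  classical
  set I : Ideal (MvPolynomial (Fin (n + 1)) ℚ) :=
    Ideal.span {p : MvPolynomial (Fin (n + 1)) ℚ | p.IsSymmetric ∧ constantCoeff p = 0} with hI
  rw [← Ideal.Quotient.eq]
  set π := Ideal.Quotient.mk I with hπ
  set a := π (X (Fin.last n)) with ha
  have hconst : ∀ k : ℕ, 0 < k → constantCoeff (esymm (Fin (n + 1)) ℚ k) = 0 := by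
    intro k hk
    rw [esymm, map_sum]
    refine Finset.sum_eq_zero fun t ht => ?_
    rw [map_prod]
    have htne : t.Nonempty := by
      rw [Finset.mem_powersetCard] at ht
      exact Finset.card_pos.mp (ht.2 ▸ hk)
    obtain ⟨i, hi⟩ := htne
    exact Finset.prod_eq_zero hi (by simp)
  have hzero : ∀ k : ℕ, 0 < k → π (esymm (Fin (n + 1)) ℚ k) = 0 := by
    intro k hk
    rw [hπ, Ideal.Quotient.eq_zero_iff_mem, hI]
    exact Ideal.subset_span ⟨esymm_isSymmetric _ _ k, hconst k hk⟩
  have hms : ∀ k : ℕ, (Finset.univ.val.map fun i : Fin (n + 1) => π (X i)).esymm k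
      = π (esymm (Fin (n + 1)) ℚ k) := by
    intro k
    rw [Finset.esymm_map_val, esymm, map_sum]
    exact Finset.sum_congr rfl fun t _ => (map_prod π _ _).symm
  have hcard : Multiset.card (Finset.univ.val.map fun i : Fin (n + 1) => π (X i)) = n + 1 := by
    simp
  have hP : (∏ i : Fin (n + 1), (Polynomial.X - Polynomial.C (π (X i))))
      = Polynomial.X ^ (n + 1) := by
    have h1 : (∏ i : Fin (n + 1), (Polynomial.X - Polynomial.C (π (X i))))
        = ((Finset.univ.val.map fun i : Fin (n + 1) => π (X i)).map
            fun t => Polynomial.X - Polynomial.C t).prod := by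
      rw [Multiset.map_map, Finset.prod_eq_multiset_prod]
      rfl
    rw [h1, Multiset.prod_X_sub_X_eq_sum_esymm, hcard]
    rw [Finset.sum_eq_single 0]
    · have h0 : (Finset.univ.val.map fun i : Fin (n + 1) => π (X i)).esymm 0 = 1 := by
        simp [Multiset.esymm, Multiset.powersetCard_zero_left]
      rw [h0]
      simp only [pow_zero, one_mul, Nat.sub_zero, map_one]
    · intro j hj hj0
      rw [hms, hzero j (Nat.pos_of_ne_zero hj0), Polynomial.C_0, zero_mul, mul_zero]
    · simp
  have hfilter : (Finset.univ.filter (fun j : Fin (n + 1) => j < Fin.last n))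
      = Finset.univ.erase (Fin.last n) := by
    ext j
    simp only [Finset.mem_filter, Finset.mem_erase, Finset.mem_univ, true_and, and_true]
    exact ⟨fun h => ne_of_lt h, fun h => lt_of_le_of_ne (Fin.le_last j) h⟩
  set rest : Polynomial (MvPolynomial (Fin (n + 1)) ℚ ⧸ I) :=
    ∏ i ∈ Finset.univ.erase (Fin.last n), (Polynomial.X - Polynomial.C (π (X i))) with hrest
  have hfact : Polynomial.X ^ (n + 1)
      = (Polynomial.X - Polynomial.C a) * rest := by
    rw [← hP, ← Finset.mul_prod_erase Finset.univ _ (Finset.mem_univ (Fin.last n)), hrest, ha]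
  have hd : Polynomial.derivative ((Polynomial.X :
        Polynomial (MvPolynomial (Fin (n + 1)) ℚ ⧸ I)) ^ (n + 1))
      = Polynomial.C ((n + 1 : ℕ) : MvPolynomial (Fin (n + 1)) ℚ ⧸ I) * Polynomial.X ^ n := by
    rw [Polynomial.derivative_X_pow, Nat.add_sub_cancel]
  have hd2 : Polynomial.derivative ((Polynomial.X - Polynomial.C a) * rest)
      = rest + (Polynomial.X - Polynomial.C a) * Polynomial.derivative rest := by
    rw [Polynomial.derivative_mul, Polynomial.derivative_sub, Polynomial.derivative_X,
      Polynomial.derivative_C, sub_zero, one_mul]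
  have heval : ((n + 1 : ℕ) : MvPolynomial (Fin (n + 1)) ℚ ⧸ I) * a ^ n
      = Polynomial.eval a rest := by
    have h := congrArg (Polynomial.eval a)
      ((hd.symm.trans (congrArg Polynomial.derivative hfact)).trans hd2)
    simp only [Polynomial.eval_mul, Polynomial.eval_C, Polynomial.eval_pow, Polynomial.eval_X,
      Polynomial.eval_add, Polynomial.eval_sub, sub_self, zero_mul, add_zero] at h
    exact h
  rw [hfilter, map_prod]
  have hL : (∏ j ∈ Finset.univ.erase (Fin.last n), π (X (Fin.last n) - X j))
      = Polynomial.eval a rest := by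
    rw [hrest, Polynomial.eval_prod]
    refine Finset.prod_congr rfl fun j _ => ?_
    rw [map_sub, Polynomial.eval_sub, Polynomial.eval_X, Polynomial.eval_C, ha]
  rw [hL, ← heval, map_mul, map_pow, ← ha]
  congr 1
  have hC : (C ((n : ℚ) + 1) : MvPolynomial (Fin (n + 1)) ℚ)
      = ((n + 1 : ℕ) : MvPolynomial (Fin (n + 1)) ℚ) := by
    rw [← map_natCast (C : ℚ →+* MvPolynomial (Fin (n + 1)) ℚ) (n + 1)]
    push_cast
    ring_nf
  rw [hC, map_natCast]
end

section
/- Every homogeneous polynomial in ℤ[x₁,…,xₙ] of degree strictly greater than n(n−1)/2 lies in the ideal S generated by the symmetric polynomials of strictly positive degree. -/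
/-!
Write `h_k(L)` for the complete homogeneous polynomial of degree `k` in the variables of a list
`L`. If `h_k(x :: xs) ∈ J` for all `k > m`, then `h_k(xs) = h_k(x :: xs) - x * h_{k-1}(x :: xs)`
lies in `J` for all `k > m + 1`, and `x ^ a ≡ -∑_{t < a} x ^ t * h_{a-t}(xs) (mod J)` for `a > m`.
So modulo `J` every monomial in the variables `x₁, …, x_ℓ` of `L` reduces, without changing its
degree, to monomials `x₁ ^ a₁ ⋯ x_ℓ ^ a_ℓ` with `a_i < m + i`, whose degree is at most
`∑_{i < ℓ} (m + i)`. For `L = [x₁, …, xₙ]`, `m = 0` and `J = S` this bound is `n(n-1)/2`, and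
`h_k(x₁, …, xₙ)` is symmetric without constant term for `k > 0`.
-/

open MvPolynomial

namespace MvPolynomial

variable {σ τ : Type*}

section CommSemiring

variable (R : Type*) [CommSemiring R]

noncomputable def hsymmList : List σ → ℕ → MvPolynomial σ R
  | [], k => if k = 0 then 1 else 0
  | x :: xs, k => ∑ i ∈ Finset.range (k + 1), X x ^ i * hsymmList xs (k - i)

variable {R}

@[simp]
theorem hsymmList_zero (L : List σ) : hsymmList R L 0 = 1 := by
  induction L <;> simp [hsymmList, *]

theorem hsymmList_cons_succ (x : σ) (xs : List σ) (k : ℕ) :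
    hsymmList R (x :: xs) (k + 1) = X x * hsymmList R (x :: xs) k + hsymmList R xs (k + 1) := by
  simp only [hsymmList, Finset.sum_range_succ' _ (k + 1), pow_succ, Finset.mul_sum]
  congr 1
  · refine Finset.sum_congr rfl fun i _ => ?_
    rw [Nat.add_sub_add_right]
    ring
  · simp

theorem isHomogeneous_hsymmList (L : List σ) (k : ℕ) : (hsymmList R L k).IsHomogeneous k := by
  induction L generalizing k with
  | nil => cases k <;> simp [hsymmList, isHomogeneous_one, isHomogeneous_zero]
  | cons x xs ih =>
    refine IsHomogeneous.sum _ _ _ fun i hi => ?_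
    convert (isHomogeneous_X_pow x i).mul (ih (k - i)) using 1
    have := Finset.mem_range.mp hi
    omega

theorem hsymmList_mem_supported (L : List σ) (k : ℕ) :
    hsymmList R L k ∈ supported R {i | i ∈ L} := by
  induction L generalizing k with
  | nil => cases k <;> simp [hsymmList]
  | cons x xs ih =>
    refine Subalgebra.sum_mem _ fun i _ => Subalgebra.mul_mem _ ?_ ?_
    · exact Subalgebra.pow_mem _
        (Algebra.subset_adjoin (s := X '' _) ⟨x, List.mem_cons_self, rfl⟩) _
    · exact supported_mono (fun i hi => List.mem_cons_of_mem x hi) (ih _)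

theorem rename_hsymmList (f : σ → τ) (L : List σ) (k : ℕ) :
    rename f (hsymmList R L k) = hsymmList R (L.map f) k := by
  induction L generalizing k with
  | nil => cases k <;> simp [hsymmList]
  | cons x xs ih => simp [hsymmList, ih]

theorem hsymmList_swap (a b : σ) (L : List σ) (k : ℕ) :
    hsymmList R (a :: b :: L) k = hsymmList R (b :: a :: L) k := by
  simp only [hsymmList, Finset.mul_sum]
  rw [Finset.sum_comm' (t' := Finset.range (k + 1)) (s' := fun j => Finset.range (k - j + 1))
    fun i j => by simp only [Finset.mem_range]; omega]
  refine Finset.sum_congr rfl fun j _ => Finset.sum_congr rfl fun i _ => ?_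
  rw [Nat.sub_right_comm]
  ring

theorem _root_.List.Perm.hsymmList_eq {L₁ L₂ : List σ} (h : L₁.Perm L₂) :
    hsymmList R L₁ = hsymmList R L₂ := by
  induction h with
  | nil => rfl
  | cons x _ ih => ext1 k; simp only [hsymmList, ih]
  | swap a b L => ext1 k; exact hsymmList_swap b a L k
  | trans _ _ ih₁ ih₂ => rw [ih₁, ih₂]

theorem isSymmetric_hsymmList_finRange (n k : ℕ) :
    (hsymmList R (List.finRange n) k).IsSymmetric := fun e => by
  rw [rename_hsymmList, e.map_finRange_perm.hsymmList_eq]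

end CommSemiring

section CommRing

variable {R : Type*} [CommRing R]

theorem X_pow_eq_hsymmList_sub (x : σ) (xs : List σ) (a : ℕ) :
    (X x : MvPolynomial σ R) ^ a =
      hsymmList R (x :: xs) a - ∑ t ∈ Finset.range a, X x ^ t * hsymmList R xs (a - t) := by
  rw [eq_sub_iff_add_eq', hsymmList, Finset.sum_range_succ, Nat.sub_self, hsymmList_zero, mul_one]

theorem monomial_eq_X_pow_mul_monomial_erase (d : σ →₀ ℕ) (x : σ) (r : R) :
    monomial d r = X x ^ d x * monomial (d.erase x) r := by
  rw [X_pow_eq_monomial, monomial_mul, one_mul, Finsupp.single_add_erase]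

variable {J : Ideal (MvPolynomial σ R)}

theorem X_pow_mul_mem_of_hsymmList_mem {x : σ} {xs : List σ} {m B : ℕ}
    (hJ : ∀ k, m < k → hsymmList R (x :: xs) k ∈ J)
    (hxs : ∀ q e, q.IsHomogeneous e → q ∈ supported R {i | i ∈ xs} → B < e → q ∈ J)
    (t : ℕ) {q : MvPolynomial σ R} {e : ℕ} (hq : q.IsHomogeneous e)
    (hq_supp : q ∈ supported R {i | i ∈ xs}) (hte : m + B < t + e) :
    X x ^ t * q ∈ J := by
  induction t using Nat.strong_induction_on generalizing q e with
  | _ t ih =>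
  by_cases htm : t ≤ m
  · exact J.mul_mem_left _ (hxs q e hq hq_supp (by omega))
  rw [X_pow_eq_hsymmList_sub x xs, sub_mul, Finset.sum_mul]
  refine J.sub_mem (J.mul_mem_right _ (hJ t (by omega))) (J.sum_mem fun s hs => ?_)
  have hst := Finset.mem_range.mp hs
  rw [mul_assoc]
  exact ih s hst ((isHomogeneous_hsymmList xs (t - s)).mul hq)
    (Subalgebra.mul_mem _ (hsymmList_mem_supported xs _) hq_supp) (by omega)

theorem IsHomogeneous.mem_of_hsymmList_mem {L : List σ} {m : ℕ}
    (hJ : ∀ k, m < k → hsymmList R L k ∈ J) {p : MvPolynomial σ R} {D : ℕ}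
    (hp : p.IsHomogeneous D) (hp_supp : p ∈ supported R {i | i ∈ L})
    (hD : ∑ i ∈ Finset.range L.length, (m + i) < D) : p ∈ J := by
  induction L generalizing m p D with
  | nil =>
    obtain ⟨r, rfl⟩ : ∃ r, C r = p := by simpa [supported_empty, Algebra.mem_bot] using hp_supp
    have hr : r = 0 := by simpa using hp.coeff_eq_zero (d := 0) (by simp; omega)
    simp [hr]
  | cons x xs ih =>
    have hJxs : ∀ k, m + 1 < k → hsymmList R xs k ∈ J := fun k hk => by
      obtain ⟨k, rfl⟩ : ∃ j, k = j + 1 := ⟨k - 1, by omega⟩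
      rw [← add_sub_cancel_left (X x * hsymmList R (x :: xs) k) (hsymmList R xs (k + 1)),
        ← hsymmList_cons_succ]
      exact J.sub_mem (hJ _ (by omega)) (J.mul_mem_left _ (hJ _ (by omega)))
    rw [← p.support_sum_monomial_coeff]
    refine J.sum_mem fun d hd => ?_
    have hc : coeff d p ≠ 0 := mem_support_iff.mp hd
    have hdeg : d x + (d.erase x).degree = D := by
      rw [← Finsupp.degree_single x (d x), ← map_add, Finsupp.single_add_erase,
        Finsupp.degree_apply, ← hp.degree_eq_sum_deg_support hd]
    have hsupp : monomial (d.erase x) (coeff d p) ∈ supported R {i | i ∈ xs} := by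
      classical
      rw [mem_supported, vars_monomial hc, Finsupp.support_erase]
      intro i hi
      obtain ⟨hix, hid⟩ := Finset.mem_erase.mp hi
      have hiL : i ∈ x :: xs :=
        mem_supported.mp hp_supp ((mem_vars_iff_mem_support i).mpr ⟨d, hd, hid⟩)
      exact (List.mem_cons.mp hiL).resolve_left hix
    have hsum : ∑ i ∈ Finset.range (xs.length + 1), (m + i) =
        m + ∑ i ∈ Finset.range xs.length, (m + 1 + i) := by
      rw [Finset.sum_range_succ', add_comm, add_zero]
      exact congrArg (m + ·) (Finset.sum_congr rfl fun i _ => by omega)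
    rw [monomial_eq_X_pow_mul_monomial_erase d x]
    exact X_pow_mul_mem_of_hsymmList_mem hJ (fun q e hq hq_supp he => ih hJxs hq hq_supp he) (d x)
      (isHomogeneous_monomial _ rfl) hsupp (by simp only [List.length_cons] at hD; omega)

end CommRing

end MvPolynomial

/-- Every homogeneous polynomial in ℤ[x₁,…,xₙ] of degree > n(n−1)/2 lies in the ideal S
generated by symmetric polynomials with zero constant term. -/
theorem homogeneous_high_degree_mem (n k : ℕ) (hk : n * (n - 1) / 2 < k)
    (p : MvPolynomial (Fin n) ℤ) (hp : p.IsHomogeneous k) :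
    p ∈ Ideal.span {q : MvPolynomial (Fin n) ℤ | q.IsSymmetric ∧ constantCoeff q = 0} := by
  have hsymm_mem : ∀ j, 0 < j → hsymmList ℤ (List.finRange n) j ∈
      Ideal.span {q : MvPolynomial (Fin n) ℤ | q.IsSymmetric ∧ constantCoeff q = 0} :=
    fun j hj => Ideal.subset_span ⟨isSymmetric_hsymmList_finRange n j, by
      rw [constantCoeff_eq]
      exact (isHomogeneous_hsymmList _ j).coeff_eq_zero (by simpa using hj.ne)⟩
  refine hp.mem_of_hsymmList_mem hsymm_mem ?_ ?_
  · simp [supported_univ]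
  · simpa [Finset.sum_range_id] using hk
end

section
/- In the ring of formal power series R[[y₁,y₂]] over a commutative ring R equipped with a formal group law F with inverse χ, the operator A defined by A(f) = f/F(y₁,χ(y₂)) + σ(f)/F(y₂,χ(y₁)), where σ swaps y₁ and y₂, is well-defined: for every f ∈ R[[y₁,y₂]], the element (1+σ)(f/F(y₁,χ(y₂))) is a genuine power series (the apparent poles cancel). Moreover for any symmetric g and any f, A(g·f) = g·A(f). -/
open MvPowerSeries

noncomputable def substPS {R : Type*} [CommRing R] {σ : Type*} (F : MvPowerSeries (Fin 2) R)
    (g h : MvPowerSeries σ R) : MvPowerSeries σ R :=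
  fun d => ∑ i ∈ Finset.range (d.sum (fun _ k => k) + 1),
    ∑ j ∈ Finset.range (d.sum (fun _ k => k) + 1),
      (MvPowerSeries.coeff (Finsupp.single 0 i + Finsupp.single 1 j) F) *
        MvPowerSeries.coeff d (g ^ i * h ^ j)

/-- The swap of the two variables of a power series in two variables. -/
noncomputable def swapPS {R : Type*} [CommRing R] (f : MvPowerSeries (Fin 2) R) :
    MvPowerSeries (Fin 2) R :=
  fun d => f (Finsupp.equivMapDomain (Equiv.swap 0 1) d)

/-- Embed a one-variable power series as a series in the second of two variables. -/
noncomputable def toSecond {R : Type*} [CommRing R] (f : PowerSeries R) :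
    MvPowerSeries (Fin 2) R :=
  fun d => if d = Finsupp.single 1 (d 1) then PowerSeries.coeff (d 1) f else 0

structure FormalGroupLaw (R : Type*) [CommRing R] where
  F : MvPowerSeries (Fin 2) R
  F_x_zero : substPS F (PowerSeries.X : PowerSeries R) 0 = PowerSeries.X
  F_zero_y : substPS F (0 : PowerSeries R) (PowerSeries.X : PowerSeries R) = PowerSeries.X
  comm : swapPS F = F
  assoc : substPS F (substPS F (MvPowerSeries.X 0) (MvPowerSeries.X 1) : MvPowerSeries (Fin 3) R)
      (MvPowerSeries.X 2) =
    substPS F (MvPowerSeries.X 0) (substPS F (MvPowerSeries.X 1) (MvPowerSeries.X 2))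

/-!
Write `D₁ = F(y₁, χ(y₂))`. On the diagonal it restricts to `F(y, χ(y)) = 0`, and a series in two
variables vanishing on the diagonal is divisible by `y₁ - y₂`; so `D₁ = (y₁ - y₂)·V`, where `V` is a
unit because `D₁(y₁, 0) = F(y₁, 0) = y₁`. Then `D₂ = σD₁ = -(y₁ - y₂)·σV`, and
`f·D₂ + σf·D₁ = -(y₁ - y₂)·(f·σV - σ(f·σV))` is `(y₁ - y₂)²` times a series, because
`f·σV - σ(f·σV)` vanishes on the diagonal as well. Dividing by the unit `V·σV` gives `h`;
it is unique because `y₁ - y₂` is a non-zero-divisor.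
-/

namespace MvPowerSeries

open Finsupp

variable {σ τ R : Type*} [CommRing R]

theorem coeff_add_single_X_mul (s : σ) (d : σ →₀ ℕ) (g : MvPowerSeries σ R) :
    coeff (d + single s 1) (X s * g) = coeff d g := by
  rw [X, add_comm, coeff_add_monomial_mul, one_mul]

theorem coeff_X_mul_eq_zero {s : σ} {d : σ →₀ ℕ} (hd : d s = 0) (g : MvPowerSeries σ R) :
    coeff d (X s * g) = 0 := by
  rw [X, coeff_monomial_mul, if_neg]
  simp [Finsupp.single_le_iff, hd]

theorem coeff_substPS (F : MvPowerSeries (Fin 2) R) (p q : MvPowerSeries σ R) (d : σ →₀ ℕ) :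
    coeff d (substPS F p q) =
      ∑ i ∈ Finset.range (d.degree + 1), ∑ j ∈ Finset.range (d.degree + 1),
        coeff (single 0 i + single 1 j) F * coeff d (p ^ i * q ^ j) := rfl

theorem map_substPS_of_coeff_eq_sum (φ : MvPowerSeries σ R →+* MvPowerSeries τ R)
    (S : (τ →₀ ℕ) → Finset (σ →₀ ℕ)) (hφ : ∀ p x, coeff x (φ p) = ∑ y ∈ S x, coeff y p)
    (hS : ∀ x, ∀ y ∈ S x, y.degree = x.degree) (F : MvPowerSeries (Fin 2) R)
    (p q : MvPowerSeries σ R) : φ (substPS F p q) = substPS F (φ p) (φ q) := by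
  ext x
  rw [hφ, coeff_substPS]
  simp only [← map_pow, ← map_mul, hφ, Finset.mul_sum]
  rw [Finset.sum_congr rfl fun y hy => by rw [coeff_substPS, hS x y hy], Finset.sum_comm]
  exact Finset.sum_congr rfl fun i _ => Finset.sum_comm

theorem rename_substPS (f : σ → τ) [Filter.TendstoCofinite f] (F : MvPowerSeries (Fin 2) R)
    (p q : MvPowerSeries σ R) :
    rename f (substPS F p q) = substPS F (rename f p) (rename f q) :=
  map_substPS_of_coeff_eq_sum (rename f).toRingHom _ (coeff_rename f)
    (fun x y hy => by
      rw [Set.Finite.mem_toFinset, Set.mem_preimage, Set.mem_singleton_iff] at hy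
      rw [← hy, degree_mapDomain]) F p q

theorem killCompl_substPS (e : σ ↪ τ) (F : MvPowerSeries (Fin 2) R)
    (p q : MvPowerSeries τ R) :
    killCompl e (substPS F p q) = substPS F (killCompl e p) (killCompl e q) :=
  map_substPS_of_coeff_eq_sum (killCompl e).toRingHom (fun x => {embDomain e x})
    (fun p x => by simp [coeff_killCompl])
    (fun _ _ hy => by simp [Finset.mem_singleton.mp hy, embDomain_eq_mapDomain]) F p q

theorem eq_single_zero_add_single_one (d : Fin 2 →₀ ℕ) :
    d = single 0 (d 0) + single 1 (d 1) := by
  ext i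
  fin_cases i <;> simp

theorem degree_fin_two (d : Fin 2 →₀ ℕ) : d.degree = d 0 + d 1 := by
  rw [degree_eq_sum, Fin.sum_univ_two]

noncomputable abbrev diagonal : MvPowerSeries (Fin 2) R →ₐ[R] PowerSeries R :=
  rename fun _ => ()

theorem coeff_diagonal (g : MvPowerSeries (Fin 2) R) (n : ℕ) :
    PowerSeries.coeff n (diagonal g) =
      ∑ i ∈ Finset.range (n + 1), coeff (single 0 i + single 1 (n - i)) g := by
  show coeff (single () n) _ = _
  rw [coeff_rename]
  symm
  refine Finset.sum_nbij' (fun i => single 0 i + single 1 (n - i)) (fun d => d 0)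
    (fun i hi => ?_) (fun d hd => ?_) (fun i _ => by simp) (fun d hd => ?_) (fun _ _ => rfl)
  · simp only [Finset.mem_range] at hi
    simp only [Set.Finite.mem_toFinset, Set.mem_preimage, Set.mem_singleton_iff, mapDomain_add,
      mapDomain_single, ← single_add]
    congr 1
    omega
  all_goals
    rw [Set.Finite.mem_toFinset, Set.mem_preimage, Set.mem_singleton_iff] at hd
    have hdeg : d 0 + d 1 = n := by
      simpa [degree_fin_two] using congrArg degree hd
  · rw [Finset.mem_range]
    omega
  · rw [← hdeg, Nat.add_sub_cancel_left, ← eq_single_zero_add_single_one]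

theorem X_sub_X_dvd_of_diagonal_eq_zero {g : MvPowerSeries (Fin 2) R} (hg : diagonal g = 0) :
    X 0 - X 1 ∣ g := by
  set c : ℕ → ℕ → R := fun a b => coeff (single 0 a + single 1 b) g with hc
  have hsum (n : ℕ) : ∑ i ∈ Finset.range (n + 1), c i (n - i) = 0 := by
    rw [hc, ← coeff_diagonal, hg, map_zero]
  -- `(X 0 - X 1) * h` telescopes to `g`; for `b = 0` this uses a full antidiagonal sum of `g`.
  let h : MvPowerSeries (Fin 2) R := fun d =>
    -∑ i ∈ Finset.range (d 0 + 1), c i (d 0 + d 1 + 1 - i)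
  have hX0 (a b : ℕ) : coeff (single 0 a + single 1 b) (X 0 * h) =
      -∑ i ∈ Finset.range a, c i (a + b - i) := by
    rcases a with _ | a
    · rw [coeff_X_mul_eq_zero (by simp)]
      simp
    · rw [single_add, add_right_comm, coeff_add_single_X_mul, coeff_apply]
      simp [h, Nat.add_right_comm a b 1]
  have hX1 (a b : ℕ) : coeff (single 0 a + single 1 b) (X 1 * h) =
      -∑ i ∈ Finset.range (a + 1), c i (a + b - i) := by
    rcases b with _ | b
    · rw [coeff_X_mul_eq_zero (by simp), add_zero, hsum, neg_zero]
    · rw [single_add, ← add_assoc, coeff_add_single_X_mul, coeff_apply]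
      simp [h, Nat.add_assoc]
  refine ⟨h, ?_⟩
  ext d
  rw [eq_single_zero_add_single_one d, sub_mul, map_sub, hX0, hX1, Finset.sum_range_succ]
  simp [c]

theorem eq_zero_of_X_sub_X_mul_eq_zero {g : MvPowerSeries (Fin 2) R}
    (hg : (X 0 - X 1) * g = 0) : g = 0 := by
  have hcoeff (a b : ℕ) : coeff (single 0 a + single 1 b) g =
      coeff (single 0 (a + 1) + single 1 b) (X 1 * g) := by
    have := congrArg (coeff (single 0 (a + 1) + single 1 b)) hg
    rwa [sub_mul, map_sub, map_zero, single_add, add_right_comm, coeff_add_single_X_mul,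
      sub_eq_zero, ← add_right_comm, ← single_add] at this
  have hvanish (b : ℕ) : ∀ a, coeff (single 0 a + single 1 b) g = 0 := by
    induction b with
    | zero => exact fun a => by rw [hcoeff, coeff_X_mul_eq_zero (by simp)]
    | succ b ih =>
      exact fun a => by rw [hcoeff, single_add 1, ← add_assoc, coeff_add_single_X_mul, ih]
  ext d
  rw [eq_single_zero_add_single_one d, hvanish, map_zero]

end MvPowerSeries

section OperatorA

open Finsupp

variable {R : Type*} [CommRing R]

theorem swapPS_eq_rename (f : MvPowerSeries (Fin 2) R) :
    swapPS f = rename (Equiv.swap (0 : Fin 2) 1) f := by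
  ext d
  have hd : d = embDomain (Equiv.swap (0 : Fin 2) 1).toEmbedding
      (equivMapDomain (Equiv.swap 0 1) d) := by
    ext i
    fin_cases i <;> simp [embDomain_eq_mapDomain, equivMapDomain_eq_mapDomain]
  conv_rhs => rw [hd]
  exact (coeff_embDomain_rename (Equiv.swap (0 : Fin 2) 1).toEmbedding f _).symm

theorem swapPS_mul (f g : MvPowerSeries (Fin 2) R) : swapPS (f * g) = swapPS f * swapPS g := by
  simp only [swapPS_eq_rename, map_mul]

theorem swapPS_swapPS (f : MvPowerSeries (Fin 2) R) : swapPS (swapPS f) = f := by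
  rw [swapPS_eq_rename, swapPS_eq_rename, rename_rename]
  exact congrArg (rename · f) (funext (Equiv.swap_apply_self 0 1)) |>.trans (rename_id_apply f)

theorem swapPS_X_sub_X : swapPS (X 0 - X 1 : MvPowerSeries (Fin 2) R) = -(X 0 - X 1) := by
  rw [swapPS_eq_rename, map_sub, rename_X, rename_X, Equiv.swap_apply_left,
    Equiv.swap_apply_right, neg_sub]

theorem diagonal_swapPS (f : MvPowerSeries (Fin 2) R) : diagonal (swapPS f) = diagonal f := by
  rw [swapPS_eq_rename, rename_rename]

theorem toSecond_eq_rename (χ : PowerSeries R) :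
    toSecond χ = rename (Function.Embedding.punit (1 : Fin 2)) χ := by
  ext d
  rw [coeff_apply, toSecond]
  split_ifs with hd
  · have hemb : single (1 : Fin 2) (d 1) =
        embDomain (Function.Embedding.punit 1) (single () (d 1)) := by
      rw [embDomain_single]
      rfl
    conv_rhs => rw [hd, hemb, coeff_embDomain_rename]
    rfl
  · refine (coeff_rename_eq_zero _ _ ?_).symm
    rintro ⟨x, rfl⟩
    rw [unique_single x, mapDomain_single] at hd
    simp [Function.Embedding.punit] at hd

theorem diagonal_toSecond (χ : PowerSeries R) : diagonal (toSecond χ) = χ := by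
  rw [toSecond_eq_rename, rename_rename]
  exact rename_id_apply χ

theorem killCompl_toSecond (χ : PowerSeries R) :
    killCompl (Function.Embedding.punit (0 : Fin 2)) (toSecond χ) =
      PowerSeries.C (PowerSeries.constantCoeff χ) := by
  refine MvPowerSeries.ext fun x => ?_
  rw [coeff_killCompl, unique_single x, embDomain_single, coeff_apply, toSecond]
  simp [PowerSeries.coeff_C, Function.Embedding.punit]

theorem X_sub_X_dvd_sub_swapPS (g : MvPowerSeries (Fin 2) R) : X 0 - X 1 ∣ g - swapPS g :=
  X_sub_X_dvd_of_diagonal_eq_zero (by rw [map_sub, diagonal_swapPS, sub_self])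

theorem existsUnique_mul_eq_add_swapPS {D V : MvPowerSeries (Fin 2) R} (hV : IsUnit V)
    (hD : D = (X 0 - X 1) * V) (f : MvPowerSeries (Fin 2) R) :
    ∃! h : MvPowerSeries (Fin 2) R, h * (D * swapPS D) = f * swapPS D + swapPS f * D := by
  have hswapV : IsUnit (swapPS V) := swapPS_eq_rename V ▸ hV.map _
  obtain ⟨W, hW⟩ := (hV.mul hswapV).exists_right_inv
  have hDD : D * swapPS D = -((X 0 - X 1) * (X 0 - X 1) * (V * swapPS V)) := by
    rw [hD, swapPS_mul, swapPS_X_sub_X]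
    ring
  obtain ⟨k, hk⟩ := X_sub_X_dvd_sub_swapPS (f * swapPS V)
  rw [swapPS_mul, swapPS_swapPS] at hk
  have hsum : f * swapPS D + swapPS f * D = -((X 0 - X 1) * (X 0 - X 1) * k) := by
    rw [hD, swapPS_mul, swapPS_X_sub_X]
    linear_combination (-(X 0 - X 1)) * hk
  rw [hDD, hsum]
  refine ⟨k * W, by linear_combination (-((X 0 - X 1) * (X 0 - X 1) * k)) * hW, fun h hh => ?_⟩
  have hhk : h * (V * swapPS V) = k :=
    sub_eq_zero.mp <| eq_zero_of_X_sub_X_mul_eq_zero <| eq_zero_of_X_sub_X_mul_eq_zero <| by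
      linear_combination -hh
  linear_combination (-h) * hW + W * hhk

theorem FormalGroupLaw.exists_isUnit_substPS_X_toSecond_eq_X_sub_X_mul (G : FormalGroupLaw R)
    {χ : PowerSeries R} (hχ0 : PowerSeries.constantCoeff χ = 0)
    (hχ : substPS G.F (PowerSeries.X : PowerSeries R) χ = 0) :
    ∃ V, IsUnit V ∧ substPS G.F (X 0) (toSecond χ) = (X 0 - X 1) * V := by
  obtain ⟨V, hV⟩ : X 0 - X 1 ∣ substPS G.F (X 0) (toSecond χ) := by
    refine X_sub_X_dvd_of_diagonal_eq_zero ?_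
    rw [rename_substPS, rename_X, diagonal_toSecond]
    exact hχ
  refine ⟨V, ?_, hV⟩
  -- `killCompl e` sets `y₂ = 0`
  set e := Function.Embedding.punit (0 : Fin 2)
  have hX0 : killCompl e (X 0 : MvPowerSeries (Fin 2) R) = PowerSeries.X := killCompl_X ()
  have hX1 : killCompl e (X 1 : MvPowerSeries (Fin 2) R) = 0 :=
    killCompl_X_eq_zero (by simp [e, Function.Embedding.punit])
  have hkill := killCompl_substPS e G.F (X 0) (toSecond χ)
  rw [killCompl_toSecond, hχ0, map_zero, hV, map_mul, map_sub, hX0, hX1, sub_zero,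
    G.F_x_zero] at hkill
  have hkV : killCompl e V = 1 := PowerSeries.X_mul_cancel (hkill.trans (mul_one _).symm)
  have hV0 : constantCoeff V = 1 := by
    rw [← coeff_zero_eq_constantCoeff_apply, ← embDomain_zero (f := e), ← coeff_killCompl, hkV,
      coeff_zero_one]
  rw [isUnit_iff_constantCoeff, hV0]
  exact isUnit_one

end OperatorA

/-- The operator A(f) = (1+σ)(f / F(y₁,χ(y₂))) is well defined: for every f there is a unique
power series h with h·F(y₁,χ(y₂))·F(y₂,χ(y₁)) = f·F(y₂,χ(y₁)) + σ(f)·F(y₁,χ(y₂));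
moreover A(g·f) = g·A(f) for symmetric g. -/
theorem operator_A_well_defined {R : Type*} [CommRing R] (G : FormalGroupLaw R)
    (χ : PowerSeries R) (hχ0 : PowerSeries.constantCoeff χ = 0)
    (hχ : substPS G.F (PowerSeries.X : PowerSeries R) χ = 0) :
    let D₁ : MvPowerSeries (Fin 2) R :=
      substPS G.F (MvPowerSeries.X 0 : MvPowerSeries (Fin 2) R) (toSecond χ)
    let D₂ : MvPowerSeries (Fin 2) R := swapPS D₁
    (∀ f : MvPowerSeries (Fin 2) R,
        ∃! h : MvPowerSeries (Fin 2) R, h * (D₁ * D₂) = f * D₂ + swapPS f * D₁) ∧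
    (∀ g f h : MvPowerSeries (Fin 2) R, swapPS g = g →
        h * (D₁ * D₂) = f * D₂ + swapPS f * D₁ →
        (g * h) * (D₁ * D₂) = (g * f) * D₂ + swapPS (g * f) * D₁) := by
  intro D₁ D₂
  obtain ⟨V, hV, hD₁⟩ := G.exists_isUnit_substPS_X_toSecond_eq_X_sub_X_mul hχ0 hχ
  refine ⟨existsUnique_mul_eq_add_swapPS hV hD₁, fun g f h hg hh => ?_⟩
  rw [swapPS_mul, hg, mul_assoc, hh]
  ring
end

section
/- In ℚ[x₁,…,xₙ] modulo the ideal S generated by symmetric polynomials of positive degree, the polynomial ∏_{i=2}^{n} x_i^{i-1} divided by x_{k+1} satisfies ∏_{i=2}^n x_i^{i-1} / x_{k+1} ≡ 2Δₙ/(x_{k+1} − x_k) (mod S), where Δₙ = (1/n!)∏_{i>j}(x_i − x_j). -/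
open MvPolynomial Finset

namespace PointDiv

noncomputable section

variable (n : ℕ)

def lower (r : ℕ) : Finset (Fin n) := univ.filter (fun i => (i : ℕ) < r)

def es (r m : ℕ) : MvPolynomial (Fin n) ℚ :=
  ∑ t ∈ (lower n r).powersetCard m, ∏ i ∈ t, X i

def Er (r : ℕ) : Ideal (MvPolynomial (Fin n) ℚ) :=
  Ideal.span ((fun m => es n r m) '' (Set.Icc 1 r))

def Vr (r : ℕ) : MvPolynomial (Fin n) ℚ :=
  ∏ i ∈ lower n r, ∏ j ∈ univ.filter (· < i), (X i - X j)

def Dr (r : ℕ) : MvPolynomial (Fin n) ℚ :=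
  ∏ i ∈ lower n r, X i ^ (i : ℕ)

variable {n}

lemma lower_succ' {r : ℕ} (hrn : r < n) :
    lower n (r + 1) = insert (⟨r, hrn⟩ : Fin n) (lower n r) := by
  ext i
  simp only [lower, mem_filter, mem_univ, true_and, Finset.mem_insert, Fin.ext_iff]
  omega

lemma notMem_lower' {r : ℕ} (hrn : r < n) : (⟨r, hrn⟩ : Fin n) ∉ lower n r := by
  simp [lower]

lemma card_lower {r : ℕ} (hrn : r ≤ n) : (lower n r).card = r := by
  induction r with
  | zero => simp [lower]
  | succ r ih =>
    rw [lower_succ' (by omega), Finset.card_insert_of_notMem (notMem_lower' (by omega)),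
      ih (by omega)]

lemma lower_succ {r : ℕ} (hrn : r < n) :
    lower n (r + 1) = insert (⟨r, hrn⟩ : Fin n) (lower n r) := by
  ext i
  simp only [lower, mem_filter, mem_univ, true_and, Finset.mem_insert, Fin.ext_iff]
  omega

lemma notMem_lower {r : ℕ} (hrn : r < n) : (⟨r, hrn⟩ : Fin n) ∉ lower n r := by
  simp [lower]

lemma es_zero (r : ℕ) : es n r 0 = 1 := by
  simp [es]

lemma es_succ {r : ℕ} (hrn : r < n) (m : ℕ) :
    es n (r + 1) (m + 1) = es n r (m + 1) + X (⟨r, hrn⟩ : Fin n) * es n r m := by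
  classical
  rw [es, lower_succ hrn, Finset.powersetCard_succ_insert (notMem_lower hrn),
    Finset.sum_union, Finset.sum_image]
  · rw [es, es, Finset.mul_sum]
    congr 1
    apply Finset.sum_congr rfl
    intro t ht
    rw [Finset.prod_insert]
    intro h
    exact notMem_lower hrn ((Finset.mem_powersetCard.mp ht).1 h)
  · intro t ht u hu htu
    have h1 : (⟨r, hrn⟩ : Fin n) ∉ t := fun h => notMem_lower hrn ((Finset.mem_powersetCard.mp ht).1 h)
    have h2 : (⟨r, hrn⟩ : Fin n) ∉ u := fun h => notMem_lower hrn ((Finset.mem_powersetCard.mp hu).1 h)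
    rw [← Finset.erase_insert h1, ← Finset.erase_insert h2, htu]
  · rw [Finset.disjoint_right]
    intro t ht ht'
    simp only [Finset.mem_image] at ht
    obtain ⟨u, hu, rfl⟩ := ht
    exact notMem_lower hrn ((Finset.mem_powersetCard.mp ht').1 (Finset.mem_insert_self _ _))

lemma es_big {r m : ℕ} (hrn : r ≤ n) (h : r < m) : es n r m = 0 := by
  rw [es, Finset.powersetCard_eq_empty.mpr (by rw [card_lower hrn]; omega), Finset.sum_empty]

lemma es_mem {r m : ℕ} (h1 : 1 ≤ m) (h2 : m ≤ r) : es n r m ∈ Er n r :=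
  Ideal.subset_span ⟨m, ⟨h1, h2⟩, rfl⟩

lemma lemA {r : ℕ} (hrn : r < n) :
    ∀ m ≤ r + 1, es n r m - C ((-1)^m : ℚ) * X (⟨r, hrn⟩ : Fin n) ^ m ∈ Er n (r + 1) := by
  intro m
  induction m with
  | zero => intro _; simp [es_zero]
  | succ m ih =>
    intro hm
    have h1 : es n (r+1) (m+1) ∈ Er n (r+1) := es_mem (by omega) (by omega)
    have h2 := es_succ hrn m
    have key : es n r (m+1) - C ((-1)^(m+1) : ℚ) * X (⟨r, hrn⟩ : Fin n) ^ (m+1)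
        = es n (r+1) (m+1) - X (⟨r, hrn⟩ : Fin n) *
          (es n r m - C ((-1)^m : ℚ) * X (⟨r, hrn⟩ : Fin n) ^ m) := by
      rw [h2, pow_succ, C_mul, map_neg, map_one]; ring
    rw [key]
    exact Ideal.sub_mem _ h1 (Ideal.mul_mem_left _ _ (ih (by omega)))

lemma Xtop_pow_mem {r : ℕ} (hrn : r < n) :
    X (⟨r, hrn⟩ : Fin n) ^ (r + 1) ∈ Er n (r + 1) := by
  have h := lemA hrn (r+1) le_rfl
  rw [es_big (by omega) (by omega)] at h
  have := Ideal.mul_mem_left (Er n (r+1)) (C ((-1)^(r+1) : ℚ)) h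
  have e : C ((-1)^(r+1) : ℚ) * (0 - C ((-1)^(r+1) : ℚ) * X (⟨r, hrn⟩ : Fin n) ^ (r+1))
      = - X (⟨r, hrn⟩ : Fin n) ^ (r+1) := by
    rw [zero_sub, mul_neg, ← mul_assoc, ← C_mul, ← pow_add, ← two_mul, pow_mul]
    norm_num
  rw [e] at this
  simpa using neg_mem this

lemma colon {r : ℕ} (hrn : r < n) :
    ∀ g ∈ Er n r, X (⟨r, hrn⟩ : Fin n) ^ r * g ∈ Er n (r + 1) := by
  intro g hg
  induction hg using Submodule.span_induction with
  | mem p hp =>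
    obtain ⟨m, ⟨hm1, hm2⟩, rfl⟩ := hp
    have key : X (⟨r, hrn⟩ : Fin n) ^ r * es n r m
        = X (⟨r, hrn⟩ : Fin n) ^ r *
            (es n r m - C ((-1)^m : ℚ) * X (⟨r, hrn⟩ : Fin n) ^ m)
          + C ((-1)^m : ℚ) * (X (⟨r, hrn⟩ : Fin n) ^ (m - 1) *
            X (⟨r, hrn⟩ : Fin n) ^ (r + 1)) := by
      rw [← pow_add, show m - 1 + (r + 1) = r + m by omega, pow_add]
      ring
    rw [key]
    exact Ideal.add_mem _ (Ideal.mul_mem_left _ _ (lemA hrn m (by omega)))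
      (Ideal.mul_mem_left _ _ (Ideal.mul_mem_left _ _ (Xtop_pow_mem hrn)))
  | zero => simpa using Ideal.zero_mem _
  | add p q _ _ hp hq => rw [mul_add]; exact Ideal.add_mem _ hp hq
  | smul c p _ hp =>
    rw [smul_eq_mul, mul_left_comm]
    exact Ideal.mul_mem_left _ _ hp

lemma prod_expand (s : Finset (Fin n)) (y : MvPolynomial (Fin n) ℚ) :
    ∏ j ∈ s, (y - X j) =
      ∑ m ∈ Finset.range (s.card + 1),
        C ((-1)^m : ℚ) * (∑ t ∈ s.powersetCard m, ∏ i ∈ t, X i) * y ^ (s.card - m) := by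
  classical
  have h := Multiset.prod_X_add_C_eq_sum_esymm (s.val.map (fun j => - X j) :
    Multiset (MvPolynomial (Fin n) ℚ))
  have h2 := congrArg (Polynomial.eval y) h
  simp only [Multiset.card_map, Polynomial.eval_multiset_prod, Multiset.map_map,
    Function.comp, Polynomial.eval_add, Polynomial.eval_X, Polynomial.eval_C,
    Polynomial.eval_finset_sum, Polynomial.eval_mul, Polynomial.eval_pow] at h2
  rw [show (Multiset.map (fun j => y + - X j) s.val).prod = ∏ j ∈ s, (y - X j) by
    rw [Finset.prod_eq_multiset_prod]; congr 1; apply Multiset.map_congr rfl; intros; ring] at h2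
  rw [← Finset.card_def] at h2
  rw [h2]
  apply Finset.sum_congr rfl
  intro m hm
  rw [Finset.esymm_map_val]
  rw [Finset.mul_sum, Finset.sum_mul, Finset.sum_mul]
  apply Finset.sum_congr rfl
  intro t ht
  have hc : t.card = m := (Finset.mem_powersetCard.mp ht).2
  have hneg : ∏ j ∈ t, (fun j => - X j : Fin n → MvPolynomial (Fin n) ℚ) j
      = C ((-1)^m : ℚ) * ∏ i ∈ t, X i := by
    have hstep : ∀ j : Fin n, (- X j : MvPolynomial (Fin n) ℚ) = C (-1 : ℚ) * X j := by
      intro j; rw [map_neg, map_one]; ring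
    rw [Finset.prod_congr rfl (fun j _ => hstep j), Finset.prod_mul_distrib,
      Finset.prod_const, hc, ← map_pow]
  rw [hneg]

lemma filter_lt_eq_lower {r : ℕ} (hrn : r < n) :
    univ.filter (· < (⟨r, hrn⟩ : Fin n)) = lower n r := by
  ext j
  simp [lower, Fin.lt_def]

lemma lemB {r : ℕ} (hrn : r < n) :
    (∏ j ∈ lower n r, (X (⟨r, hrn⟩ : Fin n) - X j)) -
      C ((r : ℚ) + 1) * X (⟨r, hrn⟩ : Fin n) ^ r ∈ Er n (r + 1) := by
  rw [prod_expand, card_lower (le_of_lt hrn)]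
  have hconst : C ((r : ℚ) + 1) * X (⟨r, hrn⟩ : Fin n) ^ r
      = ∑ _m ∈ Finset.range (r + 1), X (⟨r, hrn⟩ : Fin n) ^ r := by
    rw [Finset.sum_const, Finset.card_range, nsmul_eq_mul]
    rw [show ((r : ℚ) + 1) = ((r + 1 : ℕ) : ℚ) by push_cast; ring, map_natCast]
  have key : (∑ m ∈ Finset.range (r + 1),
        C ((-1)^m : ℚ) * (∑ t ∈ (lower n r).powersetCard m, ∏ i ∈ t, X i)
          * X (⟨r, hrn⟩ : Fin n) ^ (r - m)) -
      C ((r : ℚ) + 1) * X (⟨r, hrn⟩ : Fin n) ^ r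
      = ∑ m ∈ Finset.range (r + 1),
        (C ((-1)^m : ℚ) * (es n r m - C ((-1)^m : ℚ) * X (⟨r, hrn⟩ : Fin n) ^ m)
          * X (⟨r, hrn⟩ : Fin n) ^ (r - m)) := by
    rw [hconst, ← Finset.sum_sub_distrib]
    apply Finset.sum_congr rfl
    intro m hm
    have hmr : m ≤ r := by simpa using Nat.lt_succ_iff.mp (Finset.mem_range.mp hm)
    have hcc : (C ((-1)^m : ℚ) : MvPolynomial (Fin n) ℚ) * C ((-1)^m : ℚ) = 1 := by
      rw [← C_mul, ← pow_add, ← two_mul, pow_mul]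
      norm_num
    have hxx : (X (⟨r, hrn⟩ : Fin n) : MvPolynomial (Fin n) ℚ) ^ m * X (⟨r, hrn⟩ : Fin n) ^ (r - m)
        = X (⟨r, hrn⟩ : Fin n) ^ r := by
      rw [← pow_add]
      congr 1
      omega
    rw [es]
    linear_combination X (⟨r, hrn⟩ : Fin n) ^ (r - m) * X (⟨r, hrn⟩ : Fin n) ^ m * hcc
      + hxx
  rw [key]
  apply Ideal.sum_mem
  intro m hm
  exact Ideal.mul_mem_right _ _ (Ideal.mul_mem_left _ _
    (lemA hrn m (by have := Finset.mem_range.mp hm; omega)))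

lemma L1 : ∀ r ≤ n, Vr n r - C ((r.factorial : ℚ)) * Dr n r ∈ Er n r := by
  intro r
  induction r with
  | zero =>
    intro _
    have h0 : lower n 0 = (∅ : Finset (Fin n)) := by simp [lower]
    rw [Vr, Dr, h0]
    simp
  | succ r ih =>
    intro hrn'
    have hrn : r < n := hrn'
    have hV : Vr n (r+1) = (∏ j ∈ lower n r, (X (⟨r, hrn⟩ : Fin n) - X j)) * Vr n r := by
      rw [Vr, Vr, lower_succ hrn, Finset.prod_insert (notMem_lower hrn),
        filter_lt_eq_lower hrn]
    have hD : Dr n (r+1) = X (⟨r, hrn⟩ : Fin n) ^ r * Dr n r := by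
      rw [Dr, Dr, lower_succ hrn, Finset.prod_insert (notMem_lower hrn)]
    have halg : Vr n (r+1) - C (((r+1).factorial : ℚ)) * Dr n (r+1)
        = ((∏ j ∈ lower n r, (X (⟨r, hrn⟩ : Fin n) - X j))
              - C ((r : ℚ) + 1) * X (⟨r, hrn⟩ : Fin n) ^ r) * Vr n r
          + C ((r : ℚ) + 1) *
            (X (⟨r, hrn⟩ : Fin n) ^ r * (Vr n r - C ((r.factorial : ℚ)) * Dr n r)) := by
      rw [hV, hD, Nat.factorial_succ]
      rw [show (((r+1) * r.factorial : ℕ) : ℚ) = ((r : ℚ) + 1) * (r.factorial : ℚ) by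
        push_cast; ring, C_mul]
      ring
    rw [halg]
    exact Ideal.add_mem _ (Ideal.mul_mem_right _ _ (lemB hrn))
      (Ideal.mul_mem_left _ _ (colon hrn _ (ih (by omega))))

lemma lower_top : lower n n = (univ : Finset (Fin n)) := by
  ext i; simp [lower, i.isLt]

lemma es_eq_esymm (m : ℕ) : es n n m = esymm (Fin n) ℚ m := by
  rw [es, esymm, lower_top]

lemma constantCoeff_es {m : ℕ} (hm : 1 ≤ m) : constantCoeff (es n n m) = 0 := by
  rw [es, map_sum]
  apply Finset.sum_eq_zero
  intro t ht
  have hc : t.card = m := (Finset.mem_powersetCard.mp ht).2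
  obtain ⟨i, hi⟩ := Finset.card_pos.mp (by omega : 0 < t.card)
  rw [map_prod]
  exact Finset.prod_eq_zero hi (constantCoeff_X (R := ℚ) i)

lemma Er_le_S : Er n n ≤
    Ideal.span {p : MvPolynomial (Fin n) ℚ | p.IsSymmetric ∧ constantCoeff p = 0} := by
  rw [Er, Ideal.span_le]
  rintro p ⟨m, ⟨hm1, _⟩, rfl⟩
  apply Ideal.subset_span
  constructor
  · show (es n n m).IsSymmetric
    rw [es_eq_esymm]; exact esymm_isSymmetric (Fin n) ℚ m
  · exact constantCoeff_es hm1

lemma swap_divides (a b : Fin n) (h : MvPolynomial (Fin n) ℚ) :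
    ∃ q, h - rename (Equiv.swap a b) h = (X a - X b) * q := by
  induction h using MvPolynomial.induction_on with
  | C c => exact ⟨0, by simp⟩
  | add p q hp hq =>
    obtain ⟨qp, hqp⟩ := hp
    obtain ⟨qq, hqq⟩ := hq
    exact ⟨qp + qq, by rw [map_add, mul_add, ← hqp, ← hqq]; ring⟩
  | mul_X p i hp =>
    obtain ⟨q, hq⟩ := hp
    rcases eq_or_ne i a with rfl | hia
    · refine ⟨q * X i + rename (Equiv.swap i b) p, ?_⟩
      rw [map_mul, rename_X, Equiv.swap_apply_left]
      have : p * X i - rename (Equiv.swap i b) p * X b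
          = (p - rename (Equiv.swap i b) p) * X i
            + rename (Equiv.swap i b) p * (X i - X b) := by ring
      rw [this, hq]; ring
    · rcases eq_or_ne i b with rfl | hib
      · refine ⟨q * X i - rename (Equiv.swap a i) p, ?_⟩
        rw [map_mul, rename_X, Equiv.swap_apply_right]
        have : p * X i - rename (Equiv.swap a i) p * X a
            = (p - rename (Equiv.swap a i) p) * X i
              - rename (Equiv.swap a i) p * (X a - X i) := by ring
        rw [this, hq]; ring
      · refine ⟨q * X i, ?_⟩
        rw [map_mul, rename_X, Equiv.swap_apply_of_ne_of_ne hia hib]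
        have : p * X i - rename (Equiv.swap a b) p * X i
            = (p - rename (Equiv.swap a b) p) * X i := by ring
        rw [this, hq]; ring

lemma rename_es (σ : Equiv.Perm (Fin n)) (m : ℕ) :
    rename σ (es n n m) = es n n m := by
  have h : (es n n m).IsSymmetric := by rw [es_eq_esymm]; exact esymm_isSymmetric (Fin n) ℚ m
  exact h σ

lemma rename_mem_Er (σ : Equiv.Perm (Fin n)) {g : MvPolynomial (Fin n) ℚ}
    (hg : g ∈ Er n n) : rename σ g ∈ Er n n := by
  induction hg using Submodule.span_induction with
  | mem p hp =>
    obtain ⟨m, hm, rfl⟩ := hp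
    rw [show (fun m => es n n m) m = es n n m from rfl, rename_es]
    exact Ideal.subset_span ⟨m, hm, rfl⟩
  | zero => simp [Ideal.zero_mem]
  | add p q _ _ hp hq => rw [map_add]; exact Ideal.add_mem _ hp hq
  | smul c p _ hp => rw [smul_eq_mul, map_mul]; exact Ideal.mul_mem_left _ _ hp

lemma div_in_Er (a b : Fin n) {g : MvPolynomial (Fin n) ℚ} (hg : g ∈ Er n n) :
    ∃ q ∈ Er n n, g - rename (Equiv.swap a b) g = (X a - X b) * q := by
  induction hg using Submodule.span_induction with
  | mem p hp =>
    obtain ⟨m, hm, rfl⟩ := hp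
    refine ⟨0, Ideal.zero_mem _, ?_⟩
    rw [show (fun m => es n n m) m = es n n m from rfl, rename_es]
    ring
  | zero => exact ⟨0, Ideal.zero_mem _, by simp⟩
  | add p q hpm hqm hp hq =>
    obtain ⟨qp, hqp, ep⟩ := hp
    obtain ⟨qq, hqq, eq'⟩ := hq
    exact ⟨qp + qq, Ideal.add_mem _ hqp hqq, by rw [map_add, mul_add, ← ep, ← eq']; ring⟩
  | smul c p hpm hp =>
    obtain ⟨q, hqm, e⟩ := hp
    obtain ⟨qc, ec⟩ := swap_divides a b c
    refine ⟨c * q + qc * rename (Equiv.swap a b) p,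
      Ideal.add_mem _ (Ideal.mul_mem_left _ _ hqm)
        (Ideal.mul_mem_left _ _ (rename_mem_Er _ hpm)), ?_⟩
    rw [smul_eq_mul, map_mul]
    have key : c * p - rename (Equiv.swap a b) c * rename (Equiv.swap a b) p
        = c * (p - rename (Equiv.swap a b) p)
          + (c - rename (Equiv.swap a b) c) * rename (Equiv.swap a b) p := by ring
    rw [key, e, ec]
    ring

lemma Vr_eq_pairs : Vr n n = ∏ p ∈ univ.filter (fun p : Fin n × Fin n => p.2 < p.1),
    (X p.1 - X p.2 : MvPolynomial (Fin n) ℚ) := by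
  rw [Finset.prod_filter, ← Finset.univ_product_univ, Finset.prod_product, Vr, lower_top]
  apply Finset.prod_congr rfl
  intro i _
  rw [Finset.prod_filter]

lemma val_swap_eq {k k' x : Fin n} :
    ((Equiv.swap k k' x : Fin n) : ℕ)
      = if (x : ℕ) = (k : ℕ) then (k' : ℕ)
        else if (x : ℕ) = (k' : ℕ) then (k : ℕ) else (x : ℕ) := by
  rw [Equiv.swap_apply_def]
  rcases eq_or_ne x k with rfl | h1
  · rw [if_pos rfl, if_pos rfl]
  · rw [if_neg h1, if_neg (fun h => h1 (Fin.ext h))]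
    rcases eq_or_ne x k' with rfl | h2
    · rw [if_pos rfl, if_pos rfl]
    · rw [if_neg h2, if_neg (fun h => h2 (Fin.ext h))]

lemma swap_lt {k k' i j : Fin n} (hadj : (k' : ℕ) + 1 = (k : ℕ)) (hij : j < i)
    (hne : ¬(i = k ∧ j = k')) : Equiv.swap k k' j < Equiv.swap k k' i := by
  have hne' : ¬((i : ℕ) = (k : ℕ) ∧ (j : ℕ) = (k' : ℕ)) :=
    fun h => hne ⟨Fin.ext h.1, Fin.ext h.2⟩
  have hij' : (j : ℕ) < (i : ℕ) := hij
  rw [Fin.lt_def, val_swap_eq, val_swap_eq]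
  split_ifs <;> omega

lemma rename_W (k k' : Fin n) (hadj : (k' : ℕ) + 1 = (k : ℕ)) :
    rename (Equiv.swap k k')
      (∏ p ∈ (univ.filter (fun p : Fin n × Fin n => p.2 < p.1)).erase (k, k'),
        (X p.1 - X p.2 : MvPolynomial (Fin n) ℚ))
    = ∏ p ∈ (univ.filter (fun p : Fin n × Fin n => p.2 < p.1)).erase (k, k'),
        (X p.1 - X p.2) := by
  have hmem : ∀ p ∈ (univ.filter (fun p : Fin n × Fin n => p.2 < p.1)).erase (k, k'),
      (Equiv.swap k k' p.1, Equiv.swap k k' p.2)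
        ∈ (univ.filter (fun p : Fin n × Fin n => p.2 < p.1)).erase (k, k') := by
    intro p hp
    rw [Finset.mem_erase, Finset.mem_filter] at hp ⊢
    refine ⟨?_, Finset.mem_univ _, ?_⟩
    · intro h
      have h1 : Equiv.swap k k' p.1 = k := congrArg Prod.fst h
      have h2 : Equiv.swap k k' p.2 = k' := congrArg Prod.snd h
      have e1 : p.1 = k' := by
        have := congrArg (Equiv.swap k k') h1
        rwa [Equiv.swap_apply_self, Equiv.swap_apply_left] at this
      have e2 : p.2 = k := by
        have := congrArg (Equiv.swap k k') h2
        rwa [Equiv.swap_apply_self, Equiv.swap_apply_right] at this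
      have := hp.2.2
      rw [e1, e2, Fin.lt_def] at this
      omega
    · exact swap_lt hadj hp.2.2 (fun h => hp.1 (Prod.ext h.1 h.2))
  rw [map_prod]
  simp only [map_sub, rename_X]
  apply Finset.prod_nbij' (i := fun p : Fin n × Fin n => (Equiv.swap k k' p.1, Equiv.swap k k' p.2))
    (j := fun p : Fin n × Fin n => (Equiv.swap k k' p.1, Equiv.swap k k' p.2))
    hmem hmem
  · intro p _
    simp [Equiv.swap_apply_self]
  · intro p _
    simp [Equiv.swap_apply_self]
  · intro p _
    rfl

lemma delta_identity (k k' : Fin n) (hk : 1 ≤ (k : ℕ)) (hadj : (k' : ℕ) + 1 = (k : ℕ)) :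
    (∏ i : Fin n, (X i ^ (i : ℕ) : MvPolynomial (Fin n) ℚ))
      - rename (Equiv.swap k k') (∏ i : Fin n, (X i ^ (i : ℕ) : MvPolynomial (Fin n) ℚ))
    = (X k - X k') * (X k ^ ((k : ℕ) - 1) * ∏ i ∈ univ.erase k, X i ^ (i : ℕ)) := by
  have hkk' : k' ≠ k := Fin.ne_of_val_ne (by omega)
  have hrew : rename (Equiv.swap k k') (∏ i : Fin n, (X i ^ (i : ℕ) : MvPolynomial (Fin n) ℚ))
      = ∏ j : Fin n, (X j : MvPolynomial (Fin n) ℚ) ^ ((Equiv.swap k k' j : Fin n) : ℕ) := by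
    rw [map_prod]
    simp only [map_pow, rename_X]
    rw [← Equiv.prod_comp (Equiv.swap k k')
      (fun j => (X j : MvPolynomial (Fin n) ℚ) ^ ((Equiv.swap k k' j : Fin n) : ℕ))]
    apply Finset.prod_congr rfl
    intro i _
    rw [Equiv.swap_apply_self]
  rw [hrew]
  have hk'univ : k' ∈ univ.erase k := Finset.mem_erase.mpr ⟨hkk', Finset.mem_univ _⟩
  rw [← Finset.mul_prod_erase univ (fun i => (X i : MvPolynomial (Fin n) ℚ) ^ (i : ℕ))
      (Finset.mem_univ k),
    ← Finset.mul_prod_erase _ (fun i => (X i : MvPolynomial (Fin n) ℚ) ^ (i : ℕ)) hk'univ,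
    ← Finset.mul_prod_erase univ
      (fun j => (X j : MvPolynomial (Fin n) ℚ) ^ ((Equiv.swap k k' j : Fin n) : ℕ))
      (Finset.mem_univ k),
    ← Finset.mul_prod_erase _
      (fun j => (X j : MvPolynomial (Fin n) ℚ) ^ ((Equiv.swap k k' j : Fin n) : ℕ)) hk'univ]
  have hinner : ∏ j ∈ (univ.erase k).erase k',
        (X j : MvPolynomial (Fin n) ℚ) ^ ((Equiv.swap k k' j : Fin n) : ℕ)
      = ∏ j ∈ (univ.erase k).erase k', (X j : MvPolynomial (Fin n) ℚ) ^ (j : ℕ) := by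
    apply Finset.prod_congr rfl
    intro j hj
    rw [Finset.mem_erase, Finset.mem_erase] at hj
    rw [Equiv.swap_apply_of_ne_of_ne hj.2.1 hj.1]
  rw [hinner, Equiv.swap_apply_left, Equiv.swap_apply_right]
  obtain ⟨e, he⟩ : ∃ e, (k : ℕ) = e + 1 := ⟨(k : ℕ) - 1, by omega⟩
  have he' : (k' : ℕ) = e := by omega
  rw [he, he', Nat.add_sub_cancel]
  ring

end

end PointDiv

/-- Modulo the ideal S generated by symmetric polynomials with zero constant term,
∏_{i=2}^n x_i^{i-1} / x_{k+1} ≡ 2Δₙ/(x_{k+1} − x_k), where Δₙ = (1/n!)∏_{i>j}(x_i − x_j)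
and the division on the right removes the factor (x_{k+1} − x_k) from the product.
Here x_{j+1} is `X j`, the index k (with 1 ≤ k ≤ n−1 in the classical notation) is the
element `k : Fin n` with 1 ≤ (k : ℕ), x_{k+1} = X k and x_k = X k', k' = ⟨k-1⟩. -/
theorem point_div_class (n : ℕ) (k : Fin n) (hk : 1 ≤ (k : ℕ)) :
    (X k ^ ((k : ℕ) - 1) * ∏ i ∈ Finset.univ.erase k, X i ^ (i : ℕ)) -
      C (2 * (n.factorial : ℚ)⁻¹) *
        ∏ p ∈ (Finset.univ.filter (fun p : Fin n × Fin n => p.2 < p.1)).erase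
            (k, ⟨(k : ℕ) - 1, lt_of_le_of_lt (Nat.sub_le _ _) k.isLt⟩),
          (X p.1 - X p.2) ∈
    Ideal.span {p : MvPolynomial (Fin n) ℚ | p.IsSymmetric ∧ constantCoeff p = 0} := by
  classical
  set k' : Fin n := ⟨(k : ℕ) - 1, lt_of_le_of_lt (Nat.sub_le _ _) k.isLt⟩ with hk'def
  have hadj : (k' : ℕ) + 1 = (k : ℕ) := by
    show (k : ℕ) - 1 + 1 = (k : ℕ)
    omega
  set W := ∏ p ∈ (Finset.univ.filter (fun p : Fin n × Fin n => p.2 < p.1)).erase (k, k'),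
    (X p.1 - X p.2 : MvPolynomial (Fin n) ℚ) with hWdef
  set M := (X k ^ ((k : ℕ) - 1) *
    ∏ i ∈ Finset.univ.erase k, (X i : MvPolynomial (Fin n) ℚ) ^ (i : ℕ)) with hMdef
  have hkk'mem : (k, k') ∈ Finset.univ.filter (fun p : Fin n × Fin n => p.2 < p.1) := by
    rw [Finset.mem_filter]
    refine ⟨Finset.mem_univ _, ?_⟩
    show k' < k
    rw [Fin.lt_def]
    omega
  have hV : PointDiv.Vr n n = (X k - X k') * W := by
    rw [PointDiv.Vr_eq_pairs, ← Finset.mul_prod_erase _ _ hkk'mem]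
  have hD : PointDiv.Dr n n = ∏ i : Fin n, (X i : MvPolynomial (Fin n) ℚ) ^ (i : ℕ) := by
    rw [PointDiv.Dr, PointDiv.lower_top]
  have hg0 : PointDiv.Vr n n - C ((n.factorial : ℚ)) * PointDiv.Dr n n ∈ PointDiv.Er n n :=
    PointDiv.L1 n le_rfl
  obtain ⟨q, hqE, hq⟩ := PointDiv.div_in_Er k k' hg0
  have hσW : rename (Equiv.swap k k') W = W := PointDiv.rename_W k k' hadj
  have hσD : PointDiv.Dr n n - rename (Equiv.swap k k') (PointDiv.Dr n n)
      = (X k - X k') * M := by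
    rw [hD]
    exact PointDiv.delta_identity k k' hk hadj
  have e1 : PointDiv.Vr n n - C ((n.factorial : ℚ)) * PointDiv.Dr n n
      - rename (Equiv.swap k k') (PointDiv.Vr n n - C ((n.factorial : ℚ)) * PointDiv.Dr n n)
      = (X k - X k') * (2 * W - C ((n.factorial : ℚ)) * M) := by
    rw [hV]
    simp only [map_sub, map_mul, rename_C, rename_X, Equiv.swap_apply_left,
      Equiv.swap_apply_right, hσW]
    linear_combination (- C ((n.factorial : ℚ)) : MvPolynomial (Fin n) ℚ) * hσD
  have hd0 : (X k - X k' : MvPolynomial (Fin n) ℚ) ≠ 0 := by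
    apply sub_ne_zero.mpr
    exact fun h => (Fin.ne_of_val_ne (by omega : (k : ℕ) ≠ (k' : ℕ)))
      (MvPolynomial.X_injective h)
  have e2 : 2 * W - C ((n.factorial : ℚ)) * M = q := mul_left_cancel₀ hd0 (e1.symm.trans hq)
  have hfac : ((n.factorial : ℚ)) ≠ 0 := Nat.cast_ne_zero.mpr n.factorial_ne_zero
  have hC : (C ((n.factorial : ℚ)⁻¹) : MvPolynomial (Fin n) ℚ) * C ((n.factorial : ℚ)) = 1 := by
    rw [← C_mul, inv_mul_cancel₀ hfac, C_1]
  have hfinal : M - C (2 * (n.factorial : ℚ)⁻¹) * W = C (-(n.factorial : ℚ)⁻¹) * q := by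
    rw [← e2, map_neg]
    have h2 : (C (2 * (n.factorial : ℚ)⁻¹) : MvPolynomial (Fin n) ℚ)
        = 2 * C ((n.factorial : ℚ)⁻¹) := by
      rw [C_mul, map_ofNat]
    rw [h2]
    linear_combination (- M) * hC
  rw [hfinal]
  exact PointDiv.Er_le_S (Ideal.mul_mem_left _ _ hqE)
end
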